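/- arXiv:2305.04693 — 4 statements merged into one kernel-verified Lean document; each statement's English description precedes it below -/
import Mathlib

section
/- Let δ ≥ 1, m ≥ 1, n = m·2^δ, and let C be the binary (n,1,δ) convolutional code with generator matrix G(z) = Σ_{i=0}^{δ} G_i z^i ∈ F_2[z]^{1×n}, where the (δ+1)×n matrix whose i-th row is G_{i−1} equals S(δ+1)_1^m (m horizontal copies of the matrix whose columns are all vectors of F_2^{δ+1} with first entry 1). Then C is non-catastrophic, d_j^c(C) = n + j·(n/2) for all 0 ≤ j ≤ δ, d_j^c(C) = n + δ·(n/2) for all j ≥ δ, and d_free(C) = n + δ·(n/2). -/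
open Polynomial Matrix Finset

noncomputable section

/-- The convolutional code generated by `G(z)` (the set of codewords `u(z)·G(z)`). -/
def ccode {k n : ℕ} (G : Matrix (Fin k) (Fin n) (Polynomial (ZMod 2))) :
    Set (Fin n → Polynomial (ZMod 2)) :=
  Set.range fun u : Fin k → Polynomial (ZMod 2) => Matrix.vecMul u G

/-- The `j`-th column distance of the convolutional code generated by `G(z)`:
the minimum of `wt(v₀,…,v_j)` over codewords `v(z)` with `v₀ ≠ 0`. -/
def colDist {k n : ℕ} (G : Matrix (Fin k) (Fin n) (Polynomial (ZMod 2))) (j : ℕ) : ℕ :=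
  sInf { d | ∃ v ∈ ccode G, (fun i : Fin n => (v i).coeff 0) ≠ 0 ∧
    d = ∑ t ∈ Finset.range (j + 1), hammingNorm fun i : Fin n => (v i).coeff t }

/-- The free distance: the minimum weight of a nonzero codeword. -/
def freeDist {k n : ℕ} (G : Matrix (Fin k) (Fin n) (Polynomial (ZMod 2))) : ℕ :=
  sInf { d | ∃ v ∈ ccode G, v ≠ 0 ∧
    d = ∑ᶠ t : ℕ, hammingNorm fun i : Fin n => (v i).coeff t }

/-- The degree of the code: the maximal degree of the `k×k` minors of a generator
matrix. -/
def codeDegree {k n : ℕ} (G : Matrix (Fin k) (Fin n) (Polynomial (ZMod 2))) : ℕ :=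
  Finset.univ.sup fun c : Fin k → Fin n => (Matrix.det fun r s => G r (c s)).natDegree

/-- Non-catastrophicity: the code admits a full-row-rank polynomial parity-check
matrix. -/
def nonCatastrophic {k n : ℕ} (G : Matrix (Fin k) (Fin n) (Polynomial (ZMod 2))) : Prop :=
  ∃ H : Matrix (Fin (n - k)) (Fin n) (Polynomial (ZMod 2)),
    LinearIndependent (Polynomial (ZMod 2)) (fun r => H r) ∧
    ccode G = { v | Matrix.mulVec H v = 0 }

/-- `G` generates a binary `(n,k,δ)` convolutional code: its rows are linearly
independent over `F₂[z]` (so they form a basis of the code) and the maximal degree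
of its `k×k` minors is `δ`. -/
def IsGenOfDegree {k n : ℕ} (G : Matrix (Fin k) (Fin n) (Polynomial (ZMod 2))) (δ : ℕ) :
    Prop :=
  LinearIndependent (Polynomial (ZMod 2)) (fun r : Fin k => G r) ∧ codeDegree G = δ


lemma zmod2_eq_one {x : ZMod 2} (h : x ≠ 0) : x = 1 := by revert h; revert x; decide

lemma half_card {α : Type*} (s : Finset α) (p : α → Prop) [DecidablePred p]
    (i : α → α) (hmem : ∀ a ∈ s, i a ∈ s) (hinv : ∀ a ∈ s, i (i a) = a)
    (hflip : ∀ a ∈ s, (p (i a) ↔ ¬ p a)) :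
    2 * (s.filter p).card = s.card := by
  classical
  have h1 : (s.filter p).card = (s.filter (fun a => ¬ p a)).card := by
    refine Finset.card_bij' (fun a _ => i a) (fun a _ => i a) ?_ ?_ ?_ ?_
    · intro a ha
      rw [Finset.mem_filter] at ha ⊢
      exact ⟨hmem a ha.1, by rw [hflip a ha.1]; exact not_not_intro ha.2⟩
    · intro a ha
      rw [Finset.mem_filter] at ha ⊢
      refine ⟨hmem a ha.1, ?_⟩
      simp only [hflip a ha.1]
      exact ha.2
    · intro a ha; exact hinv a (Finset.mem_filter.mp ha).1
    · intro a ha; exact hinv a (Finset.mem_filter.mp ha).1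
  have h2 := Finset.card_filter_add_card_filter_not (s := s) (p := p)
  omega

section Count
variable {δ m n : ℕ}

/-- the set of vectors with first entry 1 -/
def Vone (δ : ℕ) : Finset (Fin (δ + 1) → ZMod 2) :=
  Finset.univ.filter fun v => v 0 = 1

lemma card_Vone (δ : ℕ) : (Vone δ).card = 2 ^ δ := by
  classical
  have hinv : ∀ a ∈ (Finset.univ : Finset (Fin (δ + 1) → ZMod 2)),
      Function.update (Function.update a 0 (a 0 + 1)) 0
        ((Function.update a 0 (a 0 + 1)) 0 + 1) = a := by
    intro a _
    funext j
    rcases eq_or_ne j 0 with rfl | hj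
    · simp only [Function.update_self]
      have : ∀ x : ZMod 2, x + 1 + 1 = x := by decide
      exact this _
    · simp [Function.update_of_ne hj]
  have hflip : ∀ a ∈ (Finset.univ : Finset (Fin (δ + 1) → ZMod 2)),
      ((Function.update a 0 (a 0 + 1)) 0 = 1 ↔ ¬ a 0 = 1) := by
    intro a _
    simp only [Function.update_self]
    have : ∀ x : ZMod 2, (x + 1 = 1 ↔ ¬ x = 1) := by decide
    exact this _
  have h := half_card (Finset.univ : Finset (Fin (δ + 1) → ZMod 2))
      (fun v => v 0 = 1) (fun v => Function.update v 0 (v 0 + 1))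
      (fun a _ => Finset.mem_univ _) hinv hflip
  have hcard : Fintype.card (Fin (δ + 1) → ZMod 2) = 2 ^ (δ + 1) := by
    rw [Fintype.card_fun]; simp
  rw [Finset.card_univ, hcard] at h
  have h2 : 2 ^ (δ + 1) = 2 * 2 ^ δ := by ring
  rw [h2] at h
  exact Nat.eq_of_mul_eq_mul_left (by norm_num) h

variable (gv : Fin n → Fin (δ + 1) → ZMod 2)
variable (hn : n = m * 2 ^ δ)
variable (hstack : ∀ v : Fin (δ + 1) → ZMod 2, v 0 = 1 →
    (Finset.univ.filter fun c => gv c = v).card = m)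

include hn hstack

/-- every column has first entry 1 -/
lemma gv_zero : ∀ c, gv c 0 = 1 := by
  classical
  have hB : (Finset.univ.filter fun c : Fin n => gv c 0 = 1)
      = (Vone δ).biUnion (fun v => Finset.univ.filter fun c => gv c = v) := by
    ext c
    simp only [Finset.mem_filter, Finset.mem_univ, true_and, Finset.mem_biUnion, Vone]
    constructor
    · intro h; exact ⟨gv c, by simp [h], rfl⟩
    · rintro ⟨v, hv, rfl⟩; simpa using hv
  have hdisj : ∀ v1 ∈ Vone δ, ∀ v2 ∈ Vone δ, v1 ≠ v2 →
      Disjoint (Finset.univ.filter fun c => gv c = v1)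
        (Finset.univ.filter fun c => gv c = v2) := by
    intro v1 _ v2 _ hne
    refine Finset.disjoint_left.mpr ?_
    intro c hc1 hc2
    simp only [Finset.mem_filter] at hc1 hc2
    exact hne (hc1.2 ▸ hc2.2 ▸ rfl)
  have hcard : (Finset.univ.filter fun c : Fin n => gv c 0 = 1).card = n := by
    rw [hB, Finset.card_biUnion hdisj]
    have : ∀ v ∈ Vone δ, (Finset.univ.filter fun c => gv c = v).card = m := by
      intro v hv
      exact hstack v (by simpa [Vone] using hv)
    rw [Finset.sum_congr rfl this, Finset.sum_const, card_Vone, smul_eq_mul, hn]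
    ring
  have := Finset.eq_univ_of_card _ (by rw [hcard, Fintype.card_fin])
  intro c
  have hc : c ∈ Finset.univ.filter fun c : Fin n => gv c 0 = 1 := by
    rw [this]; exact Finset.mem_univ c
  exact (Finset.mem_filter.mp hc).2

/-- counting lemma: pull back along gv -/
lemma count_pullback (p : (Fin (δ + 1) → ZMod 2) → Prop) [DecidablePred p] :
    (Finset.univ.filter fun c : Fin n => p (gv c)).card
      = m * ((Vone δ).filter p).card := by
  classical
  have hB : (Finset.univ.filter fun c : Fin n => p (gv c))
      = ((Vone δ).filter p).biUnion (fun v => Finset.univ.filter fun c => gv c = v) := by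
    ext c
    simp only [Finset.mem_filter, Finset.mem_univ, true_and, Finset.mem_biUnion, Vone]
    constructor
    · intro h
      exact ⟨gv c, ⟨by simp [gv_zero gv hn hstack c], h⟩, rfl⟩
    · rintro ⟨v, hv, rfl⟩; exact hv.2
  rw [hB, Finset.card_biUnion]
  · have : ∀ v ∈ (Vone δ).filter p, (Finset.univ.filter fun c => gv c = v).card = m := by
      intro v hv
      simp only [Finset.mem_filter, Vone, Finset.mem_univ, true_and] at hv
      exact hstack v hv.1
    rw [Finset.sum_congr rfl this, Finset.sum_const, smul_eq_mul, mul_comm]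
  · intro v1 _ v2 _ hne
    refine Finset.disjoint_left.mpr ?_
    intro c hc1 hc2
    simp only [Finset.mem_filter] at hc1 hc2
    exact hne (hc1.2 ▸ hc2.2 ▸ rfl)

/-- main count: weight of the linear form -/
lemma count_form (hδ : 1 ≤ δ) (w : Fin (δ + 1) → ZMod 2) :
    (Finset.univ.filter fun c : Fin n => ∑ i, w i * gv c i = 1).card
      = if ∃ i, i ≠ 0 ∧ w i ≠ 0 then n / 2 else (if w 0 = 1 then n else 0) := by
  classical
  have key := count_pullback gv hn hstack (fun v => ∑ i, w i * v i = 1)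
  rw [key]
  by_cases htail : ∃ i, i ≠ 0 ∧ w i ≠ 0
  · rw [if_pos htail]
    obtain ⟨i0, hi0, hwi0⟩ := htail
    have hwi1 : w i0 = 1 := zmod2_eq_one hwi0
    have hmem : ∀ a ∈ Vone δ, Function.update a i0 (a i0 + 1) ∈ Vone δ := by
      intro a ha
      simp only [Vone, Finset.mem_filter, Finset.mem_univ, true_and] at ha ⊢
      rw [Function.update_of_ne (Ne.symm hi0)]
      exact ha
    have hinv : ∀ a ∈ Vone δ, Function.update (Function.update a i0 (a i0 + 1)) i0
        ((Function.update a i0 (a i0 + 1)) i0 + 1) = a := by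
      intro a _
      funext j
      rcases eq_or_ne j i0 with rfl | hj
      · simp only [Function.update_self]
        have : ∀ x : ZMod 2, x + 1 + 1 = x := by decide
        exact this _
      · simp [Function.update_of_ne hj]
    have hsum : ∀ v : Fin (δ + 1) → ZMod 2,
        ∑ i, w i * (Function.update v i0 (v i0 + 1)) i = (∑ i, w i * v i) + 1 := by
      intro v
      have hF : (fun i => w i * Function.update v i0 (v i0 + 1) i)
          = Function.update (fun i => w i * v i) i0 (w i0 * (v i0 + 1)) := by
        funext j
        rcases eq_or_ne j i0 with rfl | hj
        · simp
        · simp [Function.update_of_ne hj]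
      calc ∑ i, w i * (Function.update v i0 (v i0 + 1)) i
          = ∑ i, Function.update (fun i => w i * v i) i0 (w i0 * (v i0 + 1)) i := by
            rw [hF]
        _ = w i0 * (v i0 + 1) + ∑ i ∈ Finset.univ \ {i0}, w i * v i :=
            by rw [Finset.sum_update_of_mem (Finset.mem_univ i0)]
        _ = (∑ i, w i * v i) + 1 := by
            have hsplit : ∑ i, w i * v i
                = w i0 * v i0 + ∑ i ∈ Finset.univ \ {i0}, w i * v i := by
              rw [Finset.sum_eq_sum_sdiff_singleton_add (Finset.mem_univ i0)]
              ring
            rw [hsplit, hwi1]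
            ring
    have hflip : ∀ a ∈ Vone δ,
        ((∑ i, w i * (Function.update a i0 (a i0 + 1)) i = 1) ↔ ¬ (∑ i, w i * a i = 1)) := by
      intro a _
      rw [hsum a]
      have : ∀ x : ZMod 2, (x + 1 = 1 ↔ ¬ x = 1) := by decide
      exact this _
    have h := half_card (Vone δ) (fun v => ∑ i, w i * v i = 1)
        (fun v => Function.update v i0 (v i0 + 1)) hmem hinv hflip
    rw [card_Vone] at h
    have hδ1 : δ - 1 + 1 = δ := Nat.succ_pred_eq_of_pos hδ
    have h2 : 2 ^ δ = 2 ^ (δ - 1) * 2 := by rw [← pow_succ, hδ1]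
    have hn2 : n / 2 = m * 2 ^ (δ - 1) := by
      have hn' : n = m * 2 ^ (δ - 1) * 2 := by rw [hn, h2]; ring
      rw [hn', Nat.mul_div_cancel _ (by norm_num)]
    rw [hn2]
    have hC : 2 * ((Vone δ).filter (fun v => ∑ i, w i * v i = 1)).card
        = 2 * 2 ^ (δ - 1) := by rw [h, h2]; ring
    rw [Nat.eq_of_mul_eq_mul_left (by norm_num) hC]
  · rw [if_neg htail]
    push_neg at htail
    have hw : ∀ i, i ≠ 0 → w i = 0 := by
      intro i hi
      by_contra h
      exact h (htail i hi)
    have hform : ∀ v ∈ Vone δ, (∑ i, w i * v i) = w 0 := by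
      intro v hv
      simp only [Vone, Finset.mem_filter, Finset.mem_univ, true_and] at hv
      rw [Fin.sum_univ_succ]
      have : ∀ i : Fin δ, w i.succ * v i.succ = 0 := by
        intro i
        rw [hw i.succ (Fin.succ_ne_zero i), zero_mul]
      rw [Finset.sum_congr rfl (fun i _ => this i), Finset.sum_const, smul_zero, add_zero,
        hv, mul_one]
    by_cases hw0 : w 0 = 1
    · rw [if_pos hw0]
      have : (Vone δ).filter (fun v => ∑ i, w i * v i = 1) = Vone δ := by
        apply Finset.filter_true_of_mem
        intro v hv
        rw [hform v hv, hw0]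
      rw [this, card_Vone, hn]
    · rw [if_neg hw0]
      have : (Vone δ).filter (fun v => ∑ i, w i * v i = 1) = ∅ := by
        apply Finset.filter_false_of_mem
        intro v hv
        rw [hform v hv]
        exact hw0
      rw [this]
      simp

end Count

lemma zmod2_ne_iff {x : ZMod 2} : x ≠ 0 ↔ x = 1 := by revert x; decide

lemma hammingNorm_zmod2 {N : ℕ} (f : Fin N → ZMod 2) :
    hammingNorm f = (Finset.univ.filter fun c => f c = 1).card := by
  classical
  unfold hammingNorm
  refine congrArg Finset.card ?_
  refine Finset.filter_congr ?_
  intro x _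
  exact zmod2_ne_iff

section Weight
variable {δ m n : ℕ} (hδ : 1 ≤ δ) (hn : n = m * 2 ^ δ)
variable (G : Matrix (Fin 1) (Fin n) (Polynomial (ZMod 2)))
variable (hdeg : ∀ (c : Fin n) (i : ℕ), δ < i → (G 0 c).coeff i = 0)
variable (hstack : ∀ v : Fin (δ + 1) → ZMod 2, v 0 = 1 →
      (Finset.univ.filter fun c : Fin n =>
        (fun i : Fin (δ + 1) => (G 0 c).coeff i.val) = v).card = m)

/-- the window vector of `u` at time `t` -/
def wv (δ : ℕ) (u : Polynomial (ZMod 2)) (t : ℕ) : Fin (δ + 1) → ZMod 2 :=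
  fun i => if (i : ℕ) ≤ t then u.coeff (t - i.val) else 0

include hdeg in
lemma coeff_form (u : Polynomial (ZMod 2)) (c : Fin n) (t : ℕ) :
    (u * G 0 c).coeff t = ∑ i : Fin (δ + 1), wv δ u t i * (G 0 c).coeff i.val := by
  classical
  rw [mul_comm u, Polynomial.coeff_mul, Finset.Nat.sum_antidiagonal_eq_sum_range_succ_mk]
  dsimp only
  set F : ℕ → ZMod 2 := fun k => (if k ≤ t then u.coeff (t - k) else 0) * (G 0 c).coeff k
    with hF
  have h1 : ∑ k ∈ Finset.range (t + 1), (G 0 c).coeff k * u.coeff (t - k)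
      = ∑ k ∈ Finset.range (t + 1), F k := by
    refine Finset.sum_congr rfl fun k hk => ?_
    rw [Finset.mem_range] at hk
    rw [hF]
    simp only []
    rw [if_pos (by omega)]
    ring
  have h2 : ∑ i : Fin (δ + 1), wv δ u t i * (G 0 c).coeff i.val
      = ∑ k ∈ Finset.range (δ + 1), F k := by
    rw [← Fin.sum_univ_eq_sum_range F (δ + 1)]
    rfl
  rw [h1, h2]
  have hsub1 : Finset.range (t + 1) ⊆ Finset.range (max t δ + 1) := by
    apply Finset.range_subset_range.mpr; omega
  have hsub2 : Finset.range (δ + 1) ⊆ Finset.range (max t δ + 1) := by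
    apply Finset.range_subset_range.mpr; omega
  rw [Finset.sum_subset hsub1 ?_, Finset.sum_subset hsub2 ?_]
  · intro k _ hk
    rw [Finset.mem_range, not_lt] at hk
    rw [hF]
    simp only []
    rw [hdeg c k (by omega), mul_zero]
  · intro k _ hk
    rw [Finset.mem_range, not_lt] at hk
    rw [hF]
    simp only []
    rw [if_neg (by omega), zero_mul]

include hδ hn hdeg hstack in
lemma weight_eq (u : Polynomial (ZMod 2)) (t : ℕ) :
    hammingNorm (fun c : Fin n => (u * G 0 c).coeff t)
      = if ∃ s, s < t ∧ t ≤ s + δ ∧ u.coeff s ≠ 0 then n / 2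
        else if u.coeff t ≠ 0 then n else 0 := by
  classical
  rw [hammingNorm_zmod2]
  have hcoeff : ∀ c : Fin n, (u * G 0 c).coeff t
      = ∑ i : Fin (δ + 1), wv δ u t i * (G 0 c).coeff i.val :=
    fun c => coeff_form G hdeg u c t
  have hfilter : (Finset.univ.filter fun c : Fin n => (u * G 0 c).coeff t = 1)
      = Finset.univ.filter fun c : Fin n =>
          ∑ i : Fin (δ + 1), wv δ u t i * (G 0 c).coeff i.val = 1 := by
    refine Finset.filter_congr fun c _ => by rw [hcoeff c]
  rw [hfilter]
  have := count_form (fun c i => (G 0 c).coeff i.val) hn hstack hδ (wv δ u t)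
  rw [this]
  have hiff : (∃ i : Fin (δ + 1), i ≠ 0 ∧ wv δ u t i ≠ 0)
      ↔ (∃ s, s < t ∧ t ≤ s + δ ∧ u.coeff s ≠ 0) := by
    constructor
    · rintro ⟨i, hi0, hwi⟩
      have hival : (i : ℕ) ≠ 0 := by
        intro h; exact hi0 (Fin.ext h)
      have hile : (i : ℕ) ≤ t := by
        by_contra h
        rw [wv, if_neg h] at hwi
        exact hwi rfl
      refine ⟨t - i.val, by omega, by have := i.isLt; omega, ?_⟩
      rw [wv, if_pos hile] at hwi
      exact hwi
    · rintro ⟨s, hst, hts, hus⟩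
      have h1 : 1 ≤ t - s := by omega
      have h2 : t - s ≤ δ := by omega
      refine ⟨⟨t - s, by omega⟩, ?_, ?_⟩
      · intro h
        have := Fin.mk.injEq (t - s) (by omega : t - s < δ + 1) 0 (by omega)
        rw [Fin.ext_iff] at h
        simp at h
        omega
      · rw [wv]
        simp only []
        rw [if_pos (by omega : t - s ≤ t)]
        have : t - (t - s) = s := by omega
        rw [this]
        exact hus
  have hw0 : wv δ u t 0 = u.coeff t := by
    rw [wv]
    simp
  by_cases hA : ∃ s, s < t ∧ t ≤ s + δ ∧ u.coeff s ≠ 0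
  · rw [if_pos (hiff.mpr hA), if_pos hA]
  · rw [if_neg (fun h => hA (hiff.mp h)), if_neg hA, hw0]
    by_cases hB : u.coeff t ≠ 0
    · rw [if_pos (zmod2_ne_iff.mp hB), if_pos hB]
    · rw [if_neg, if_neg hB]
      intro h
      rw [not_not] at hB
      rw [hB] at h
      exact one_ne_zero h.symm

end Weight

/-- rate `1/n` construction from the `m`-fold partial simplex code.
The stacked coefficient matrix (rows `G₀,…,G_δ`) is `S(δ+1)₁^m`, expressed by saying
that every vector of `F₂^(δ+1)` with first entry `1` appears as a column exactly `m`
times.  Then `C` is non-catastrophic, `d_j^c(C) = n + j·(n/2)` for `j ≤ δ`,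
`d_j^c(C) = n + δ·(n/2)` for `j ≥ δ`, and `d_free(C) = n + δ·(n/2)`. -/
theorem partialSimplex_convolutional_code (δ m n : ℕ) (hδ : 1 ≤ δ) (hm : 1 ≤ m)
    (hn : n = m * 2 ^ δ)
    (G : Matrix (Fin 1) (Fin n) (Polynomial (ZMod 2)))
    (hdeg : ∀ (c : Fin n) (i : ℕ), δ < i → (G 0 c).coeff i = 0)
    (hstack : ∀ v : Fin (δ + 1) → ZMod 2, v 0 = 1 →
      (Finset.univ.filter fun c : Fin n =>
        (fun i : Fin (δ + 1) => (G 0 c).coeff i.val) = v).card = m) :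
    nonCatastrophic G ∧
    (∀ j : ℕ, j ≤ δ → colDist G j = n + j * (n / 2)) ∧
    (∀ j : ℕ, δ ≤ j → colDist G j = n + δ * (n / 2)) ∧
    freeDist G = n + δ * (n / 2) := by
  classical
  have npos : 0 < n := by
    rw [hn]; exact Nat.mul_pos hm (pow_pos (by norm_num) δ)
  set c0 : Fin n := ⟨0, npos⟩ with hc0def
  -- every column has constant coefficient 1
  have hg0 : ∀ c : Fin n, (G 0 c).coeff 0 = 1 := by
    have := gv_zero (fun c (i : Fin (δ + 1)) => (G 0 c).coeff i.val) hn
      (fun v hv => hstack v hv)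
    exact fun c => this c
  -- weight of a codeword row at time t
  have hW : ∀ (u : Polynomial (ZMod 2)) (t : ℕ),
      hammingNorm (fun c : Fin n => (u * G 0 c).coeff t)
        = if ∃ s, s < t ∧ t ≤ s + δ ∧ u.coeff s ≠ 0 then n / 2
          else if u.coeff t ≠ 0 then n else 0 :=
    fun u t => weight_eq hδ hn G hdeg hstack u t
  have hvm : ∀ (u : Fin 1 → Polynomial (ZMod 2)) (c : Fin n),
      Matrix.vecMul u G c = u 0 * G 0 c := by
    intro u c
    simp [Matrix.vecMul, dotProduct]
  have hmem1 : ∀ p : Polynomial (ZMod 2), (fun c : Fin n => p * G 0 c) ∈ ccode G := by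
    intro p
    exact ⟨fun _ => p, by funext c; exact hvm (fun _ => p) c⟩
  -- block sum lemma
  have hblock : ∀ (u : Polynomial (ZMod 2)) (t0 j : ℕ), j ≤ δ → u.coeff t0 ≠ 0 →
      (∀ s, s < t0 → u.coeff s = 0) →
      ∑ i ∈ Finset.range (j + 1),
        hammingNorm (fun c : Fin n => (u * G 0 c).coeff (t0 + i)) = n + j * (n / 2) := by
    intro u t0 j hj hu0 hlow
    rw [Finset.sum_range_succ']
    have h0 : hammingNorm (fun c : Fin n => (u * G 0 c).coeff (t0 + 0)) = n := by
      rw [hW u (t0 + 0), if_neg, if_pos (by simpa using hu0)]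
      rintro ⟨s, hs1, hs2, hs3⟩
      exact hs3 (hlow s (by omega))
    have hmid : ∀ i ∈ Finset.range j,
        hammingNorm (fun c : Fin n => (u * G 0 c).coeff (t0 + (i + 1))) = n / 2 := by
      intro i hi
      rw [Finset.mem_range] at hi
      rw [hW u (t0 + (i + 1)), if_pos ⟨t0, by omega, by omega, hu0⟩]
    rw [Finset.sum_congr rfl hmid, h0, Finset.sum_const, Finset.card_range, smul_eq_mul]
    omega
  have hone0 : (1 : Polynomial (ZMod 2)).coeff 0 ≠ 0 := by
    simp
  have honeLow : ∀ s : ℕ, s < 0 → (1 : Polynomial (ZMod 2)).coeff s = 0 := by omega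
  have honeHi : ∀ t : ℕ, δ < t →
      hammingNorm (fun c : Fin n => ((1 : Polynomial (ZMod 2)) * G 0 c).coeff t) = 0 := by
    intro t ht
    rw [hW 1 t, if_neg, if_neg]
    · rw [not_not, Polynomial.coeff_one, if_neg (by omega)]
    · rintro ⟨s, hs1, hs2, hs3⟩
      exact hs3 (by rw [Polynomial.coeff_one, if_neg (by omega)])
  -- the sum for u with u.coeff 0 ≠ 0, j ≤ δ
  have hsum1 : ∀ (u : Polynomial (ZMod 2)), u.coeff 0 ≠ 0 → ∀ j, j ≤ δ →
      ∑ t ∈ Finset.range (j + 1),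
        hammingNorm (fun c : Fin n => (u * G 0 c).coeff t) = n + j * (n / 2) := by
    intro u hu j hj
    have := hblock u 0 j hj hu (by omega)
    simpa using this
  -- the sum for u = 1, any j ≥ δ
  have hsum2 : ∀ j, δ ≤ j →
      ∑ t ∈ Finset.range (j + 1),
        hammingNorm (fun c : Fin n => ((1 : Polynomial (ZMod 2)) * G 0 c).coeff t)
        = n + δ * (n / 2) := by
    intro j hj
    rw [Finset.range_eq_Ico,
      ← Finset.sum_Ico_consecutive _ (Nat.zero_le (δ + 1)) (by omega : δ + 1 ≤ j + 1)]
    rw [← Finset.range_eq_Ico]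
    rw [hsum1 1 hone0 δ le_rfl]
    have hz : ∑ t ∈ Finset.Ico (δ + 1) (j + 1),
        hammingNorm (fun c : Fin n => ((1 : Polynomial (ZMod 2)) * G 0 c).coeff t) = 0 := by
      apply Finset.sum_eq_zero
      intro t ht
      rw [Finset.mem_Ico] at ht
      exact honeHi t (by omega)
    rw [hz, add_zero]
  -- support of the weight function
  have hsupp : ∀ u : Polynomial (ZMod 2),
      (Function.support fun t => hammingNorm (fun c : Fin n => (u * G 0 c).coeff t))
        ⊆ ↑(Finset.range (u.natDegree + δ + 1)) := by
    intro u t ht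
    simp only [Function.mem_support] at ht
    rw [Finset.coe_range, Set.mem_Iio]
    by_contra hN
    apply ht
    rw [hW u t, if_neg, if_neg]
    · rw [not_not]
      exact Polynomial.coeff_eq_zero_of_natDegree_lt (by omega)
    · rintro ⟨s, h1, h2, h3⟩
      exact h3 (Polynomial.coeff_eq_zero_of_natDegree_lt (by omega))
  have hfree_ub : ∑ᶠ t : ℕ,
      hammingNorm (fun c : Fin n => ((1 : Polynomial (ZMod 2)) * G 0 c).coeff t)
      = n + δ * (n / 2) := by
    rw [finsum_eq_sum_of_support_subset _ (hsupp 1)]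
    have h1 : (1 : Polynomial (ZMod 2)).natDegree + δ + 1 = δ + 1 := by
      rw [Polynomial.natDegree_one]
      omega
    rw [h1]
    exact hsum1 1 hone0 δ le_rfl
  have hfree_lb : ∀ u : Polynomial (ZMod 2), u ≠ 0 →
      n + δ * (n / 2) ≤ ∑ᶠ t : ℕ,
        hammingNorm (fun c : Fin n => (u * G 0 c).coeff t) := by
    intro u hu
    set t0 := u.natTrailingDegree with ht0
    have hu0 : u.coeff t0 ≠ 0 := Polynomial.coeff_natTrailingDegree_ne_zero.mpr hu
    have hlow : ∀ s, s < t0 → u.coeff s = 0 := fun s hs =>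
      Polynomial.coeff_eq_zero_of_lt_natTrailingDegree hs
    rw [finsum_eq_sum_of_support_subset _ (hsupp u)]
    have hsub : Finset.Icc t0 (t0 + δ) ⊆ Finset.range (u.natDegree + δ + 1) := by
      intro x hx
      rw [Finset.mem_Icc] at hx
      rw [Finset.mem_range]
      have := Polynomial.natTrailingDegree_le_natDegree u
      omega
    have hIcc : ∑ x ∈ Finset.Icc t0 (t0 + δ),
        hammingNorm (fun c : Fin n => (u * G 0 c).coeff x) = n + δ * (n / 2) := by
      rw [← Finset.Ico_add_one_right_eq_Icc, Finset.sum_Ico_eq_sum_range]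
      have h1 : t0 + δ + 1 - t0 = δ + 1 := by omega
      rw [h1]
      exact hblock u t0 δ le_rfl hu0 hlow
    rw [← hIcc]
    exact Finset.sum_le_sum_of_subset hsub
  -- column distance, j ≤ δ
  have hcol1 : ∀ j : ℕ, j ≤ δ → colDist G j = n + j * (n / 2) := by
    intro j hj
    have hSet : { d | ∃ v ∈ ccode G, (fun i : Fin n => (v i).coeff 0) ≠ 0 ∧
        d = ∑ t ∈ Finset.range (j + 1), hammingNorm fun i : Fin n => (v i).coeff t }
        = {n + j * (n / 2)} := by
      ext d
      simp only [Set.mem_setOf_eq, Set.mem_singleton_iff]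
      constructor
      · rintro ⟨v, hv, hv0, rfl⟩
        obtain ⟨u, hu⟩ := hv
        have hform : ∀ c, v c = u 0 * G 0 c := fun c => by rw [← hu]; exact hvm u c
        have hu0 : (u 0).coeff 0 ≠ 0 := by
          intro h
          apply hv0
          funext c
          show (v c).coeff 0 = 0
          rw [hform c, Polynomial.mul_coeff_zero, h, zero_mul]
        simp only [hform]
        exact hsum1 (u 0) hu0 j hj
      · rintro rfl
        refine ⟨fun c => (1 : Polynomial (ZMod 2)) * G 0 c, hmem1 1, ?_, (hsum1 1 hone0 j hj).symm⟩
        intro hzero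
        have h1 := congrFun hzero c0
        simp only [one_mul, Pi.zero_apply] at h1
        rw [hg0 c0] at h1
        exact one_ne_zero h1
    rw [colDist, hSet, csInf_singleton]
  -- column distance, j ≥ δ
  have hcol2 : ∀ j : ℕ, δ ≤ j → colDist G j = n + δ * (n / 2) := by
    intro j hj
    have hmemS : (n + δ * (n / 2)) ∈ { d | ∃ v ∈ ccode G,
        (fun i : Fin n => (v i).coeff 0) ≠ 0 ∧
        d = ∑ t ∈ Finset.range (j + 1), hammingNorm fun i : Fin n => (v i).coeff t } := by
      refine ⟨fun c => (1 : Polynomial (ZMod 2)) * G 0 c, hmem1 1, ?_, (hsum2 j hj).symm⟩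
      intro hzero
      have h1 := congrFun hzero c0
      simp only [one_mul, Pi.zero_apply] at h1
      rw [hg0 c0] at h1
      exact one_ne_zero h1
    rw [colDist]
    apply le_antisymm (Nat.sInf_le hmemS)
    apply le_csInf ⟨_, hmemS⟩
    rintro d ⟨v, hv, hv0, rfl⟩
    obtain ⟨u, hu⟩ := hv
    have hform : ∀ c, v c = u 0 * G 0 c := fun c => by rw [← hu]; exact hvm u c
    have hu0 : (u 0).coeff 0 ≠ 0 := by
      intro h
      apply hv0
      funext c
      show (v c).coeff 0 = 0
      rw [hform c, Polynomial.mul_coeff_zero, h, zero_mul]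
    calc n + δ * (n / 2)
        = ∑ t ∈ Finset.range (δ + 1),
            hammingNorm (fun c : Fin n => (u 0 * G 0 c).coeff t) :=
          (hsum1 (u 0) hu0 δ le_rfl).symm
      _ ≤ ∑ t ∈ Finset.range (j + 1),
            hammingNorm (fun c : Fin n => (u 0 * G 0 c).coeff t) :=
          Finset.sum_le_sum_of_subset (Finset.range_subset_range.mpr (by omega))
      _ = ∑ t ∈ Finset.range (j + 1), hammingNorm fun i : Fin n => (v i).coeff t := by
          simp only [hform]
  -- free distance
  have hfree : freeDist G = n + δ * (n / 2) := by
    have hvne : (fun c : Fin n => (1 : Polynomial (ZMod 2)) * G 0 c) ≠ 0 := by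
      intro h
      have h1 := congrFun h c0
      simp only [one_mul, Pi.zero_apply] at h1
      have h0 := hg0 c0
      rw [h1] at h0
      simp at h0
    have hmemS : n + δ * (n / 2) ∈ { d | ∃ v ∈ ccode G, v ≠ 0 ∧
        d = ∑ᶠ t : ℕ, hammingNorm fun i : Fin n => (v i).coeff t } :=
      ⟨fun c => (1 : Polynomial (ZMod 2)) * G 0 c, hmem1 1, hvne, hfree_ub.symm⟩
    rw [freeDist]
    apply le_antisymm (Nat.sInf_le hmemS)
    apply le_csInf ⟨_, hmemS⟩
    rintro d ⟨v, hv, hvne', rfl⟩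
    obtain ⟨u, hu⟩ := hv
    have hform : ∀ c, v c = u 0 * G 0 c := fun c => by rw [← hu]; exact hvm u c
    have hune : u 0 ≠ 0 := by
      intro h
      apply hvne'
      funext c
      rw [hform c, h, zero_mul]
      rfl
    have hrw : (fun t : ℕ => hammingNorm fun i : Fin n => (v i).coeff t)
        = fun t : ℕ => hammingNorm (fun c : Fin n => (u 0 * G 0 c).coeff t) := by
      funext t
      simp only [hform]
    rw [hrw]
    exact hfree_lb (u 0) hune
  -- non-catastrophicity
  have hcolone : ∃ c1 : Fin n, G 0 c1 = 1 := by
    have hcard := hstack (fun i => if i = 0 then 1 else 0) (by simp)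
    have hpos : 0 < (Finset.univ.filter fun c : Fin n =>
        (fun i : Fin (δ + 1) => (G 0 c).coeff i.val)
          = fun i => if i = 0 then 1 else 0).card := by omega
    obtain ⟨c1, hc1⟩ := Finset.card_pos.mp hpos
    rw [Finset.mem_filter] at hc1
    refine ⟨c1, ?_⟩
    have heq := hc1.2
    apply Polynomial.ext
    intro k
    rw [Polynomial.coeff_one]
    by_cases hk : k ≤ δ
    · have h2 : (G 0 c1).coeff k
          = if (⟨k, by omega⟩ : Fin (δ + 1)) = 0 then 1 else 0 :=
        congrFun heq ⟨k, by omega⟩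
      rw [h2]
      by_cases hk0 : k = 0
      · subst hk0
        simp [Fin.ext_iff]
      · rw [if_neg hk0, if_neg (fun hcon => hk0 (by simpa using congrArg Fin.val hcon))]
    · rw [hdeg c1 k (by omega), if_neg (by omega)]
  obtain ⟨c1, hc1⟩ := hcolone
  have hn1 : n - 1 + 1 = n := Nat.succ_pred_eq_of_pos npos
  set e : Fin (n - 1) → Fin n := fun r => Fin.cast hn1 ((Fin.cast hn1.symm c1).succAbove r)
    with he
  have he_ne : ∀ r, e r ≠ c1 := by
    intro r h
    apply Fin.succAbove_ne (Fin.cast hn1.symm c1) r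
    apply Fin.val_injective
    have h2 := congrArg Fin.val h
    simpa [he] using h2
  have he_inj : Function.Injective e := by
    intro r1 r2 h
    apply Fin.succAbove_right_injective (p := Fin.cast hn1.symm c1)
    apply Fin.val_injective
    have h2 := congrArg Fin.val h
    simpa [he] using h2
  have he_surj : ∀ c : Fin n, c ≠ c1 → ∃ r, e r = c := by
    intro c hc
    have hne : Fin.cast hn1.symm c ≠ Fin.cast hn1.symm c1 := by
      intro hcon
      apply hc
      apply Fin.val_injective
      have := congrArg Fin.val hcon
      simpa using this
    obtain ⟨r, hr⟩ := Fin.exists_succAbove_eq hne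
    refine ⟨r, ?_⟩
    apply Fin.val_injective
    have := congrArg Fin.val hr
    simpa [he] using this
  set H : Matrix (Fin (n - 1)) (Fin n) (Polynomial (ZMod 2)) :=
    fun r c => (if c = e r then 1 else 0) + (if c = c1 then G 0 (e r) else 0) with hH
  have hHmul : ∀ (v : Fin n → Polynomial (ZMod 2)) (r : Fin (n - 1)),
      Matrix.mulVec H v r = v (e r) + G 0 (e r) * v c1 := by
    intro v r
    simp [Matrix.mulVec, dotProduct, hH, add_mul, ite_mul, one_mul, zero_mul,
      Finset.sum_add_distrib, Finset.sum_ite_eq']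
  have hchar2 : ∀ x : Polynomial (ZMod 2), x + x = 0 := by
    intro x
    have h110 : (1 + 1 : Polynomial (ZMod 2)) = 0 := by
      rw [← Polynomial.C_1, ← Polynomial.C_add,
        show (1 + 1 : ZMod 2) = 0 from by decide, Polynomial.C_0]
    calc x + x = (1 + 1) * x := by ring
      _ = 0 := by rw [h110, zero_mul]
  have hLI : LinearIndependent (Polynomial (ZMod 2)) (fun r => H r) := by
    rw [Fintype.linearIndependent_iff]
    intro a ha r
    have hev := congrFun ha (e r)
    rw [Finset.sum_apply] at hev
    simp only [Pi.smul_apply, smul_eq_mul, Pi.zero_apply] at hev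
    have hHval : ∀ i, H i (e r) = if i = r then 1 else 0 := by
      intro i
      rw [hH]
      simp only []
      rw [if_neg (he_ne r), add_zero]
      by_cases hir : i = r
      · subst hir
        rw [if_pos rfl, if_pos rfl]
      · rw [if_neg (fun hcon => hir (he_inj hcon).symm), if_neg hir]
    rw [Finset.sum_congr rfl (fun i _ => by rw [hHval i])] at hev
    simp only [mul_ite, mul_one, mul_zero] at hev
    rw [Finset.sum_ite_eq' Finset.univ r a] at hev
    simpa using hev
  have hKer : ccode G = { v | Matrix.mulVec H v = 0 } := by
    ext v
    simp only [Set.mem_setOf_eq]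
    constructor
    · rintro ⟨u, hu⟩
      have hform : ∀ c, v c = u 0 * G 0 c := fun c => by rw [← hu]; exact hvm u c
      funext r
      rw [hHmul v r, hform (e r), hform c1, hc1, mul_one]
      have hz : u 0 * G 0 (e r) + G 0 (e r) * u 0 = 0 := by
        rw [mul_comm (G 0 (e r))]
        exact hchar2 _
      rw [hz]
      simp
    · intro hker
      refine ⟨fun _ => v c1, ?_⟩
      funext c
      show Matrix.vecMul (fun _ => v c1) G c = v c
      rw [hvm (fun _ => v c1) c]
      by_cases hc : c = c1
      · subst hc
        rw [hc1, mul_one]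
      · obtain ⟨r, hr⟩ := he_surj c hc
        have hk := congrFun hker r
        rw [hHmul v r, Pi.zero_apply] at hk
        rw [← hr]
        calc v c1 * G 0 (e r) = G 0 (e r) * v c1 := mul_comm _ _
          _ = (v (e r) + v (e r)) + G 0 (e r) * v c1 := by rw [hchar2, zero_add]
          _ = v (e r) + (v (e r) + G 0 (e r) * v c1) := by ring
          _ = v (e r) := by rw [hk, add_zero]
  exact ⟨⟨H, hLI, hKer⟩, hcol1, hcol2, hfree⟩


end
end

section
/- Let δ ≥ 1, m ≥ 1, n = m·2^δ, and let C be the binary (n,1,δ) convolutional code with generator matrix G(z) = Σ_{i=0}^{δ} G_i z^i ∈ F_2[z]^{1×n}, where the (δ+1)×n matrix whose i-th row is G_{i−1} equals S(δ+1)_1^m. Then C has optimal column distances: there exists no binary (n,1,δ) convolutional code Ĉ such that d_j^c(Ĉ) > d_j^c(C) for some j ∈ ℕ_0 while d_i^c(Ĉ) = d_i^c(C) for all 0 ≤ i < j. -/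
open Polynomial Matrix Finset

noncomputable section

lemma zmod2_ne_one : ∀ x : ZMod 2, x ≠ 1 → x = 0 := by decide
lemma zmod2_two : (1 + 1 : ZMod 2) = 0 := by decide
lemma flip_card_eq {N : ℕ} (i₀ : Fin N) (P Q : (Fin N → ZMod 2) → Prop)
    [DecidablePred P] [DecidablePred Q]
    (h : ∀ v, P v ↔ Q (v + Pi.single i₀ 1)) :
    (univ.filter P).card = (univ.filter Q).card := by
  have hinv : ∀ v : Fin N → ZMod 2, v + Pi.single i₀ 1 + Pi.single i₀ 1 = v := by
    intro v
    rw [add_assoc, ← Pi.single_add, zmod2_two, Pi.single_zero, add_zero]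
  refine Finset.card_bij' (fun v _ => v + Pi.single i₀ 1) (fun v _ => v + Pi.single i₀ 1)
    ?_ ?_ ?_ ?_
  · intro v hv
    simp only [mem_filter, mem_univ, true_and] at hv ⊢
    exact (h v).1 hv
  · intro v hv
    simp only [mem_filter, mem_univ, true_and] at hv ⊢
    rw [h _, hinv]
    exact hv
  · intro v _; exact hinv v
  · intro v _; exact hinv v

lemma card_first_one (N : ℕ) :
    (univ.filter fun v : Fin (N + 1) → ZMod 2 => v 0 = 1).card = 2 ^ N := by
  classical
  have h1 : (univ.filter fun v : Fin (N + 1) → ZMod 2 => v 0 = 1).card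
      = (univ.filter fun v : Fin (N + 1) → ZMod 2 => ¬ (v 0 = 1)).card := by
    refine flip_card_eq 0 _ _ (fun v => ?_)
    simp only [Pi.add_apply, Pi.single_eq_same]
    constructor
    · intro hv; rw [hv]; simp [zmod2_two]
    · intro hv
      by_contra hne
      rw [zmod2_ne_one _ hne, zero_add] at hv
      exact hv rfl
  have h2 : (univ.filter fun v : Fin (N + 1) → ZMod 2 => v 0 = 1).card
      + (univ.filter fun v : Fin (N + 1) → ZMod 2 => ¬ (v 0 = 1)).card
      = (univ : Finset (Fin (N + 1) → ZMod 2)).card :=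
    Finset.card_filter_add_card_filter_not
      (p := fun v : Fin (N + 1) → ZMod 2 => v 0 = 1)
  have h3 : (univ : Finset (Fin (N + 1) → ZMod 2)).card = 2 ^ (N + 1) := by
    simp [Fintype.card_fun, ZMod.card]
  rw [h3] at h2
  rw [h1] at h2 ⊢
  have h4 : 2 ^ (N + 1) = 2 ^ N * 2 := pow_succ 2 N
  generalize hA : (univ.filter fun v : Fin (N + 1) → ZMod 2 => ¬ (v 0 = 1)).card = A at h2 ⊢
  clear h1 h3 hA
  omega

lemma zmod2_ne_zero : ∀ x : ZMod 2, x ≠ 0 → x = 1 := by decide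

lemma card_affine_half {δ : ℕ} (hδ : 1 ≤ δ) (a : Fin (δ + 1) → ZMod 2) (i₀ : Fin (δ + 1))
    (hi₀ : i₀ ≠ 0) (ha : a i₀ ≠ 0) :
    (univ.filter fun v : Fin (δ + 1) → ZMod 2 => v 0 = 1 ∧ ∑ i, a i * v i ≠ 0).card
      = 2 ^ (δ - 1) := by
  classical
  have hsum : ∀ v : Fin (δ + 1) → ZMod 2,
      ∑ i, a i * (v + (Pi.single i₀ 1 : Fin (δ + 1) → ZMod 2)) i = (∑ i, a i * v i) + 1 := by
    intro v
    have : ∀ i, a i * (v + (Pi.single i₀ 1 : Fin (δ + 1) → ZMod 2)) i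
        = a i * v i + a i * (Pi.single i₀ 1 : Fin (δ + 1) → ZMod 2) i := by
      intro i; simp [mul_add]
    rw [Finset.sum_congr rfl fun i _ => this i, Finset.sum_add_distrib]
    congr 1
    rw [Finset.sum_eq_single i₀]
    · simp [zmod2_ne_zero _ ha]
    · intro b _ hb; simp [Pi.single_eq_of_ne hb]
    · simp
  have h1 : (univ.filter fun v : Fin (δ + 1) → ZMod 2 => v 0 = 1 ∧ ∑ i, a i * v i ≠ 0).card
      = (univ.filter fun v : Fin (δ + 1) → ZMod 2 => v 0 = 1 ∧ ¬ (∑ i, a i * v i ≠ 0)).card := by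
    refine flip_card_eq i₀ _ _ (fun v => ?_)
    rw [hsum v]
    have h0 : (v + (Pi.single i₀ 1 : Fin (δ + 1) → ZMod 2)) 0 = v 0 := by
      simp [Pi.single_eq_of_ne (Ne.symm hi₀)]
    rw [h0]
    constructor
    · rintro ⟨hv0, hs⟩
      refine ⟨hv0, ?_⟩
      rw [zmod2_ne_zero _ hs, zmod2_two]
      simp
    · rintro ⟨hv0, hs⟩
      push_neg at hs
      refine ⟨hv0, ?_⟩
      intro h0'
      rw [h0', zero_add] at hs
      exact one_ne_zero hs
  have h2 : (univ.filter fun v : Fin (δ + 1) → ZMod 2 => v 0 = 1 ∧ ∑ i, a i * v i ≠ 0).card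
      + (univ.filter fun v : Fin (δ + 1) → ZMod 2 => v 0 = 1 ∧ ¬ (∑ i, a i * v i ≠ 0)).card
      = (univ.filter fun v : Fin (δ + 1) → ZMod 2 => v 0 = 1).card := by
    rw [← Finset.filter_filter, ← Finset.filter_filter]
    apply Finset.card_filter_add_card_filter_not
  rw [card_first_one] at h2
  obtain ⟨δ', rfl⟩ : ∃ δ', δ = δ' + 1 := ⟨δ - 1, (Nat.succ_pred_eq_of_pos hδ).symm⟩
  have h4 : 2 ^ (δ' + 1) = 2 ^ δ' * 2 := pow_succ 2 δ'
  have h5 : δ' + 1 - 1 = δ' := rfl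
  rw [h5]
  rw [← h1, h4] at h2
  generalize hA : (univ.filter fun v : Fin (δ' + 1 + 1) → ZMod 2 => v 0 = 1 ∧ ∑ i, a i * v i ≠ 0).card = A at h2 ⊢
  clear h1 hsum hA
  omega

lemma col_g0 {δ m n : ℕ} (hδ : 1 ≤ δ) (hn : n = m * 2 ^ δ)
    (g : Fin n → Fin (δ + 1) → ZMod 2)
    (hstack : ∀ v : Fin (δ + 1) → ZMod 2, v 0 = 1 →
      (univ.filter fun c => g c = v).card = m) :
    ∀ c, g c 0 = 1 := by
  classical
  have hfib : (univ : Finset (Fin n)).card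
      = ∑ v ∈ (univ : Finset (Fin (δ + 1) → ZMod 2)),
        (univ.filter fun c => g c = v).card :=
    Finset.card_eq_sum_card_fiberwise (fun c _ => mem_univ _)
  have hsplit : ∑ v ∈ (univ : Finset (Fin (δ + 1) → ZMod 2)),
        (univ.filter fun c => g c = v).card
      = ∑ v ∈ univ.filter (fun v : Fin (δ + 1) → ZMod 2 => v 0 = 1),
          (univ.filter fun c => g c = v).card
      + ∑ v ∈ univ.filter (fun v : Fin (δ + 1) → ZMod 2 => ¬ (v 0 = 1)),
          (univ.filter fun c => g c = v).card :=
    (Finset.sum_filter_add_sum_filter_not univ _ _).symm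
  have h1 : ∑ v ∈ univ.filter (fun v : Fin (δ + 1) → ZMod 2 => v 0 = 1),
      (univ.filter fun c => g c = v).card = 2 ^ δ * m := by
    rw [Finset.sum_congr rfl (fun v hv => hstack v (mem_filter.1 hv).2),
      Finset.sum_const, card_first_one δ, smul_eq_mul]
  have hcardn : (univ : Finset (Fin n)).card = m * 2 ^ δ := by
    rw [Finset.card_univ, Fintype.card_fin, hn]
  have hrest : ∑ v ∈ univ.filter (fun v : Fin (δ + 1) → ZMod 2 => ¬ (v 0 = 1)),
      (univ.filter fun c => g c = v).card = 0 := by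
    have h6 := hfib
    rw [hsplit, h1, hcardn] at h6
    have h2 : 2 ^ δ * m = m * 2 ^ δ := mul_comm _ _
    generalize hR : ∑ v ∈ univ.filter (fun v : Fin (δ + 1) → ZMod 2 => ¬ (v 0 = 1)),
      (univ.filter fun c => g c = v).card = R at h6 ⊢
    clear hfib hsplit h1 hcardn hstack hR
    omega
  intro c
  by_contra hne
  have hv : g c ∈ univ.filter (fun v : Fin (δ + 1) → ZMod 2 => ¬ (v 0 = 1)) := by
    simp only [mem_filter, mem_univ, true_and]
    exact hne
  have h0 := (Finset.sum_eq_zero_iff.1 hrest) (g c) hv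
  have hcpos : c ∈ univ.filter fun c' => g c' = g c := by
    simp
  rw [Finset.card_eq_zero] at h0
  rw [h0] at hcpos
  exact absurd hcpos (Finset.notMem_empty c)

lemma col_count {δ m n : ℕ} (hδ : 1 ≤ δ) (hn : n = m * 2 ^ δ)
    (g : Fin n → Fin (δ + 1) → ZMod 2)
    (hstack : ∀ v : Fin (δ + 1) → ZMod 2, v 0 = 1 →
      (univ.filter fun c => g c = v).card = m)
    (a : Fin (δ + 1) → ZMod 2) (i₀ : Fin (δ + 1)) (hi₀ : i₀ ≠ 0) (ha : a i₀ ≠ 0) :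
    (univ.filter fun c => ∑ i, a i * g c i ≠ 0).card = m * 2 ^ (δ - 1) := by
  classical
  have hg0 := col_g0 hδ hn g hstack
  have hmap : ∀ c ∈ univ.filter (fun c => ∑ i, a i * g c i ≠ 0),
      g c ∈ univ.filter (fun v : Fin (δ + 1) → ZMod 2 => v 0 = 1 ∧ ∑ i, a i * v i ≠ 0) := by
    intro c hc
    simp only [mem_filter, mem_univ, true_and] at hc ⊢
    exact ⟨hg0 c, hc⟩
  have hfib := Finset.card_eq_sum_card_fiberwise hmap
  have hinner : ∀ v ∈ univ.filter
      (fun v : Fin (δ + 1) → ZMod 2 => v 0 = 1 ∧ ∑ i, a i * v i ≠ 0),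
      ((univ.filter (fun c => ∑ i, a i * g c i ≠ 0)).filter fun c => g c = v).card = m := by
    intro v hv
    simp only [mem_filter, mem_univ, true_and] at hv
    rw [Finset.filter_filter]
    have : ∀ c : Fin n, ((∑ i, a i * g c i ≠ 0) ∧ g c = v) ↔ g c = v := by
      intro c
      constructor
      · exact fun h => h.2
      · intro h
        refine ⟨?_, h⟩
        rw [h]
        exact hv.2
    rw [Finset.filter_congr (fun c _ => this c)]
    exact hstack v hv.1
  rw [hfib, Finset.sum_congr rfl hinner, Finset.sum_const,
    card_affine_half hδ a i₀ hi₀ ha, smul_eq_mul, mul_comm]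

lemma coeff_mul_expand {δ : ℕ} (p q : Polynomial (ZMod 2))
    (hq : ∀ i, δ < i → q.coeff i = 0) (t : ℕ) :
    (p * q).coeff t
      = ∑ i : Fin (δ + 1), (if i.val ≤ t then p.coeff (t - i.val) else 0) * q.coeff i.val := by
  have h1 : (p * q).coeff t
      = ∑ k ∈ Finset.range (t + 1), q.coeff k * p.coeff (t - k) := by
    rw [mul_comm, Polynomial.coeff_mul,
      Finset.Nat.sum_antidiagonal_eq_sum_range_succ_mk]
  set F : ℕ → ZMod 2 := fun k => (if k ≤ t then p.coeff (t - k) else 0) * q.coeff k with hF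
  have h2 : ∑ k ∈ Finset.range (t + 1), q.coeff k * p.coeff (t - k)
      = ∑ k ∈ Finset.range (t + 1), F k := by
    refine Finset.sum_congr rfl fun k hk => ?_
    rw [Finset.mem_range] at hk
    rw [hF]
    simp only []
    rw [if_pos (by omega : k ≤ t), mul_comm]
  have h3 : ∑ k ∈ Finset.range (t + 1), F k = ∑ k ∈ Finset.range (max t δ + 1), F k := by
    refine Finset.sum_subset (Finset.range_subset_range.2 (by omega)) fun k hk hk' => ?_
    rw [Finset.mem_range] at hk hk'
    rw [hF]
    simp only []
    rw [if_neg (by omega), zero_mul]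
  have h4 : ∑ k ∈ Finset.range (δ + 1), F k = ∑ k ∈ Finset.range (max t δ + 1), F k := by
    refine Finset.sum_subset (Finset.range_subset_range.2 (by omega)) fun k hk hk' => ?_
    rw [Finset.mem_range] at hk hk'
    rw [hF]
    simp only []
    rw [hq k (by omega), mul_zero]
  rw [h1, h2, h3, ← h4, ← Fin.sum_univ_eq_sum_range F (δ + 1)]

lemma sum_w_eq (n K δ : ℕ) (f : ℕ → ℕ) (h0 : f 0 = n)
    (hK : ∀ s, 1 ≤ s → s ≤ δ → f s = K) (hhi : ∀ s, δ < s → f s = 0) :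
    ∀ j, ∑ t ∈ Finset.range (j + 1), f t = n + min j δ * K := by
  intro j
  induction j with
  | zero => simpa using h0
  | succ j ih =>
    rw [Finset.sum_range_succ, ih]
    by_cases hj : j + 1 ≤ δ
    · rw [hK (j + 1) (by omega) hj]
      have : min (j + 1) δ = min j δ + 1 := by omega
      rw [this, add_mul, one_mul, add_assoc]
    · rw [hhi (j + 1) (by omega)]
      have : min (j + 1) δ = min j δ := by omega
      rw [this, add_zero]

lemma sum_w_le (n K δ : ℕ) (f : ℕ → ℕ) (h0 : n ≤ f 0)
    (hK : ∀ s, 1 ≤ s → s ≤ δ → K ≤ f s) :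
    ∀ j, n + min j δ * K ≤ ∑ t ∈ Finset.range (j + 1), f t := by
  intro j
  induction j with
  | zero => simpa using h0
  | succ j ih =>
    rw [Finset.sum_range_succ]
    by_cases hj : j + 1 ≤ δ
    · have h1 : min (j + 1) δ = min j δ + 1 := by omega
      have h2 := hK (j + 1) (by omega) hj
      rw [h1, add_mul, one_mul]
      omega
    · have h1 : min (j + 1) δ = min j δ := by omega
      rw [h1]
      omega

lemma sum_head (n K : ℕ) (f : ℕ → ℕ) (h0 : f 0 = n) :
    ∀ t, (∀ s, 1 ≤ s → s < t → f s = K) →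
      ∑ s ∈ Finset.range t, f s = if t = 0 then 0 else n + (t - 1) * K := by
  intro t
  induction t with
  | zero => simp
  | succ t ih =>
    intro hK
    rw [Finset.sum_range_succ, ih (fun s h1 h2 => hK s h1 (by omega))]
    by_cases ht : t = 0
    · subst ht; simp [h0]
    · rw [if_neg ht, if_neg (by omega)]
      rw [hK t (by omega) (by omega)]
      have : t + 1 - 1 = t - 1 + 1 := by omega
      rw [this, add_mul, one_mul, add_assoc]


lemma vecMul_one_row {n : ℕ} (M : Matrix (Fin 1) (Fin n) (Polynomial (ZMod 2)))
    (p : Polynomial (ZMod 2)) :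
    Matrix.vecMul (fun _ : Fin 1 => p) M = fun c => p * M 0 c := by
  funext c
  simp [Matrix.vecMul, dotProduct]

lemma mem_colDist_set {n : ℕ} (M : Matrix (Fin 1) (Fin n) (Polynomial (ZMod 2)))
    (j : ℕ) (p : Polynomial (ZMod 2))
    (hne : (fun c : Fin n => (p * M 0 c).coeff 0) ≠ 0) :
    (∑ t ∈ Finset.range (j + 1), hammingNorm fun c : Fin n => (p * M 0 c).coeff t)
      ∈ { d | ∃ v ∈ ccode M, (fun i : Fin n => (v i).coeff 0) ≠ 0 ∧
          d = ∑ t ∈ Finset.range (j + 1), hammingNorm fun i : Fin n => (v i).coeff t } :=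
  ⟨fun c => p * M 0 c, ⟨fun _ => p, vecMul_one_row M p⟩, hne, rfl⟩

lemma colDist_le {n : ℕ} (M : Matrix (Fin 1) (Fin n) (Polynomial (ZMod 2)))
    (j : ℕ) (p : Polynomial (ZMod 2))
    (hne : (fun c : Fin n => (p * M 0 c).coeff 0) ≠ 0) :
    colDist M j ≤ ∑ t ∈ Finset.range (j + 1), hammingNorm fun c : Fin n => (p * M 0 c).coeff t :=
  Nat.sInf_le (mem_colDist_set M j p hne)

lemma exists_p_of_mem_colDist {n : ℕ} (M : Matrix (Fin 1) (Fin n) (Polynomial (ZMod 2)))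
    (j d : ℕ)
    (hd : d ∈ { d | ∃ v ∈ ccode M, (fun i : Fin n => (v i).coeff 0) ≠ 0 ∧
        d = ∑ t ∈ Finset.range (j + 1), hammingNorm fun i : Fin n => (v i).coeff t }) :
    ∃ p : Polynomial (ZMod 2), (fun c : Fin n => (p * M 0 c).coeff 0) ≠ 0 ∧
      d = ∑ t ∈ Finset.range (j + 1), hammingNorm fun c : Fin n => (p * M 0 c).coeff t := by
  obtain ⟨v, ⟨u, hu⟩, hne, hdv⟩ := hd
  have hv : v = Matrix.vecMul u M := hu.symm
  have hveq : v = fun c => u 0 * M 0 c := by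
    funext c
    rw [hv]
    simp [Matrix.vecMul, dotProduct]
  subst hveq
  exact ⟨u 0, hne, hdv⟩


lemma squeeze_arith (n K Wt A : ℕ) (h2K : n = 2 * K)
    (h5 : n + (A + K) ≤ n + A + Wt) (h6 : n + (A + K) ≤ n + A + (n - Wt))
    (h7 : Wt ≤ n) : Wt = K := by omega

lemma arith_sub (n K Wj : ℕ) (h2K : n = 2 * K) (h : ¬ Wj ≤ K) : n - Wj ≤ K := by omega

lemma mul_pred (t K : ℕ) (h1 : 1 ≤ t) : t * K = (t - 1) * K + K := by
  calc t * K = (t - 1 + 1) * K := by rw [Nat.sub_add_cancel h1]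
  _ = (t - 1) * K + K := by rw [add_mul, one_mul]

/-- the rate `1/n` code constructed from the `m`-fold partial simplex code
has optimal column distances: no binary `(n,1,δ)` convolutional code `Ĉ` satisfies
`d_j^c(Ĉ) > d_j^c(C)` for some `j` while `d_i^c(Ĉ) = d_i^c(C)` for all `i < j`. -/
theorem partialSimplex_convolutional_code_optimal (δ m n : ℕ) (hδ : 1 ≤ δ) (hm : 1 ≤ m)
    (hn : n = m * 2 ^ δ)
    (G : Matrix (Fin 1) (Fin n) (Polynomial (ZMod 2)))
    (hdeg : ∀ (c : Fin n) (i : ℕ), δ < i → (G 0 c).coeff i = 0)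
    (hstack : ∀ v : Fin (δ + 1) → ZMod 2, v 0 = 1 →
      (Finset.univ.filter fun c : Fin n =>
        (fun i : Fin (δ + 1) => (G 0 c).coeff i.val) = v).card = m) :
    ¬ ∃ (G' : Matrix (Fin 1) (Fin n) (Polynomial (ZMod 2))) (j : ℕ),
        IsGenOfDegree G' δ ∧
        (∀ i : ℕ, i < j → colDist G' i = colDist G i) ∧
        colDist G j < colDist G' j := by
  classical
  rintro ⟨G', j, ⟨hLI, hdegG'⟩, heq, hlt⟩
  set K := m * 2 ^ (δ - 1) with hKdef
  have hd1 : δ - 1 + 1 = δ := by omega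
  have h2K : n = 2 * K := by
    have e : 2 ^ δ = 2 ^ (δ - 1) * 2 := by rw [← pow_succ, hd1]
    rw [hn, hKdef, e]; ring
  have hnpos : 0 < n := by rw [hn]; positivity
  -- counting facts for G
  have hg0 : ∀ c : Fin n, (G 0 c).coeff 0 = 1 := by
    have h := col_g0 hδ hn (fun c (i : Fin (δ + 1)) => (G 0 c).coeff i.val) hstack
    exact fun c => h c
  have hcount : ∀ (a : Fin (δ + 1) → ZMod 2) (i₀ : Fin (δ + 1)), i₀ ≠ 0 → a i₀ ≠ 0 →
      (univ.filter fun c : Fin n => ∑ i, a i * (G 0 c).coeff i.val ≠ 0).card = K := by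
    intro a i₀ h1 h2
    exact col_count hδ hn (fun c (i : Fin (δ + 1)) => (G 0 c).coeff i.val) hstack a i₀ h1 h2
  -- weights for G
  have hWG0 : ∀ p : Polynomial (ZMod 2), p.coeff 0 = 1 →
      (hammingNorm fun c : Fin n => (p * G 0 c).coeff 0) = n := by
    intro p hp
    show (univ.filter fun c : Fin n => (p * G 0 c).coeff 0 ≠ 0).card = n
    have hall : ∀ c : Fin n, (p * G 0 c).coeff 0 = 1 := by
      intro c; rw [Polynomial.mul_coeff_zero, hp, hg0 c, one_mul]
    rw [Finset.filter_true_of_mem (fun c _ => by rw [hall c]; exact one_ne_zero),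
      card_univ, Fintype.card_fin]
  have hWGmid : ∀ p : Polynomial (ZMod 2), p.coeff 0 = 1 → ∀ t, 1 ≤ t → t ≤ δ →
      (hammingNorm fun c : Fin n => (p * G 0 c).coeff t) = K := by
    intro p hp t h1 h2
    show (univ.filter fun c : Fin n => (p * G 0 c).coeff t ≠ 0).card = K
    calc (univ.filter fun c : Fin n => (p * G 0 c).coeff t ≠ 0).card
        = (univ.filter fun c : Fin n =>
            ∑ i : Fin (δ + 1), (if i.val ≤ t then p.coeff (t - i.val) else 0)
              * (G 0 c).coeff i.val ≠ 0).card := by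
          apply congrArg Finset.card
          apply Finset.filter_congr
          intro c _
          rw [coeff_mul_expand p (G 0 c) (hdeg c) t]
      _ = K := by
          refine hcount _ ⟨t, by omega⟩ ?_ ?_
          · intro hcon
            have := congrArg Fin.val hcon
            simp only [Fin.val_zero] at this
            omega
          · simp only []
            rw [if_pos (le_refl t), Nat.sub_self, hp]
            exact one_ne_zero
  have hWGhi : ∀ t, δ < t →
      (hammingNorm fun c : Fin n => ((1 : Polynomial (ZMod 2)) * G 0 c).coeff t) = 0 := by
    intro t ht
    show (univ.filter fun c : Fin n => ((1 : Polynomial (ZMod 2)) * G 0 c).coeff t ≠ 0).card = 0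
    rw [Finset.card_eq_zero, Finset.filter_eq_empty_iff]
    intro c _
    simp only [one_mul, ne_eq, not_not]
    exact hdeg c t ht
  -- exact value of colDist G
  have hGval : ∀ j', colDist G j' = n + min j' δ * K := by
    intro j'
    have hone : (fun c : Fin n => ((1 : Polynomial (ZMod 2)) * G 0 c).coeff 0) ≠ 0 := by
      intro hzero
      have h := congrFun hzero ⟨0, hnpos⟩
      simp only [one_mul, Pi.zero_apply] at h
      rw [hg0] at h
      exact one_ne_zero h
    have hmemb := mem_colDist_set G j' 1 hone
    have hval : (∑ t ∈ Finset.range (j' + 1),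
        hammingNorm fun c : Fin n => ((1 : Polynomial (ZMod 2)) * G 0 c).coeff t)
        = n + min j' δ * K := by
      refine sum_w_eq n K δ _ ?_ ?_ ?_ j'
      · exact hWG0 1 (by simp)
      · intro s h1 h2; exact hWGmid 1 (by simp) s h1 h2
      · exact hWGhi
    apply le_antisymm
    · rw [← hval]; exact Nat.sInf_le hmemb
    · refine le_csInf ⟨_, hmemb⟩ ?_
      intro d hd
      obtain ⟨p, hpne, hdp⟩ := exists_p_of_mem_colDist G j' d hd
      have hp0 : p.coeff 0 = 1 := by
        by_contra hne1
        have hp00 := zmod2_ne_one _ hne1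
        apply hpne
        funext c
        show (p * G 0 c).coeff 0 = 0
        rw [Polynomial.mul_coeff_zero, hp00, zero_mul]
      rw [hdp]
      refine sum_w_le n K δ _ ?_ ?_ j'
      · rw [hWG0 p hp0]
      · intro s h1 h2; rw [hWGmid p hp0 s h1 h2]
  -- G' columns have degree ≤ δ
  have hdegcol : ∀ c : Fin n, (G' 0 c).natDegree ≤ δ := by
    intro c
    have h := Finset.le_sup
      (f := fun cc : Fin 1 → Fin n => (Matrix.det fun r s => G' r (cc s)).natDegree)
      (Finset.mem_univ (fun _ : Fin 1 => c))
    rw [show (Finset.univ.sup fun cc : Fin 1 → Fin n =>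
      (Matrix.det fun r s => G' r (cc s)).natDegree) = codeDegree G' from rfl, hdegG'] at h
    rw [show (Matrix.det fun r s => G' r c) = G' 0 c from Matrix.det_fin_one _] at h
    exact h
  have hdeg' : ∀ (c : Fin n) (i : ℕ), δ < i → (G' 0 c).coeff i = 0 :=
    fun c i hi => Polynomial.coeff_eq_zero_of_natDegree_lt (lt_of_le_of_lt (hdegcol c) hi)
  -- case split on j
  rcases Nat.eq_zero_or_pos j with hj0 | hjpos
  · -- j = 0
    subst hj0
    rw [hGval 0] at hlt
    simp only [Nat.zero_min, Nat.zero_mul, Nat.add_zero] at hlt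
    have hub : colDist G' 0 ≤ n := by
      show sInf { d | ∃ v ∈ ccode G', (fun i : Fin n => (v i).coeff 0) ≠ 0 ∧
        d = ∑ t ∈ Finset.range (0 + 1), hammingNorm fun i : Fin n => (v i).coeff t } ≤ n
      set S := { d | ∃ v ∈ ccode G', (fun i : Fin n => (v i).coeff 0) ≠ 0 ∧
        d = ∑ t ∈ Finset.range (0 + 1), hammingNorm fun i : Fin n => (v i).coeff t } with hS
      rcases Set.eq_empty_or_nonempty S with he | hne
      · rw [he, Nat.sInf_empty]; exact Nat.zero_le n
      · have hmm := Nat.sInf_mem hne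
        rw [hS] at hmm
        obtain ⟨v, hv, hvne, hval⟩ := hmm
        rw [hval, Finset.sum_range_one]
        calc hammingNorm (fun i : Fin n => (v i).coeff 0)
            = (univ.filter fun i : Fin n => (v i).coeff 0 ≠ 0).card := rfl
          _ ≤ (univ : Finset (Fin n)).card := Finset.card_filter_le _ _
          _ = n := by rw [card_univ, Fintype.card_fin]
    exact absurd hlt (not_lt.2 hub)
  · -- j ≥ 1 : constant coefficients of all columns of G' are 1
    have hq0 : ∀ c : Fin n, (G' 0 c).coeff 0 = 1 := by
      have h0 := heq 0 hjpos
      rw [hGval 0] at h0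
      simp only [Nat.zero_min, Nat.zero_mul, Nat.add_zero] at h0
      set S := { d | ∃ v ∈ ccode G', (fun i : Fin n => (v i).coeff 0) ≠ 0 ∧
        d = ∑ t ∈ Finset.range (0 + 1), hammingNorm fun i : Fin n => (v i).coeff t } with hS
      have hSval : colDist G' 0 = sInf S := rfl
      have hSne : S.Nonempty := by
        by_contra hc
        rw [Set.not_nonempty_iff_eq_empty] at hc
        rw [hSval, hc, Nat.sInf_empty] at h0
        rw [← h0] at hnpos
        exact lt_irrefl 0 hnpos
      have hmm := Nat.sInf_mem hSne
      rw [← hSval, h0] at hmm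
      obtain ⟨p, hpne, hpd⟩ := exists_p_of_mem_colDist G' 0 n hmm
      rw [Finset.sum_range_one] at hpd
      have hp0 : p.coeff 0 = 1 := by
        by_contra hne1
        have hp00 := zmod2_ne_one _ hne1
        apply hpne
        funext c
        show (p * G' 0 c).coeff 0 = 0
        rw [Polynomial.mul_coeff_zero, hp00, zero_mul]
      have hall : ∀ c : Fin n, (p * G' 0 c).coeff 0 ≠ 0 := by
        have hcard : (univ.filter fun c : Fin n => (p * G' 0 c).coeff 0 ≠ 0).card
            = (univ : Finset (Fin n)).card := by
          rw [card_univ, Fintype.card_fin]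
          exact hpd.symm
        have hequniv : (univ.filter fun c : Fin n => (p * G' 0 c).coeff 0 ≠ 0)
            = (univ : Finset (Fin n)) :=
          Finset.eq_of_subset_of_card_le (Finset.filter_subset _ _) (le_of_eq hcard.symm)
        intro c
        have hcc : c ∈ univ.filter fun c : Fin n => (p * G' 0 c).coeff 0 ≠ 0 := by
          rw [hequniv]; exact Finset.mem_univ c
        exact (Finset.mem_filter.1 hcc).2
      intro c
      have h := hall c
      rw [Polynomial.mul_coeff_zero, hp0, one_mul] at h
      exact zmod2_ne_zero _ h
    -- coefficients of (1 + ε X^t) * column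
    have hcoeff : ∀ (ε : ZMod 2) (t : ℕ) (c : Fin n) (s : ℕ),
        ((1 + Polynomial.C ε * Polynomial.X ^ t) * G' 0 c).coeff s
          = (G' 0 c).coeff s + ε * (if t ≤ s then (G' 0 c).coeff (s - t) else 0) := by
      intro ε t c s
      rw [add_mul, one_mul, Polynomial.coeff_add]
      congr 1
      rw [mul_assoc, Polynomial.coeff_C_mul, mul_comm (Polynomial.X ^ t) (G' 0 c),
        Polynomial.coeff_mul_X_pow']
    have hpc0 : ∀ (ε : ZMod 2) (t : ℕ), 1 ≤ t →
        (1 + Polynomial.C ε * Polynomial.X ^ t).coeff 0 = 1 := by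
      intro ε t ht
      rw [Polynomial.coeff_add, Polynomial.coeff_one, Polynomial.coeff_C_mul,
        Polynomial.coeff_X_pow]
      rw [if_pos rfl, if_neg (by omega : ¬ (0 = t)), mul_zero, add_zero]
    have hpne' : ∀ p : Polynomial (ZMod 2), p.coeff 0 = 1 →
        (fun c : Fin n => (p * G' 0 c).coeff 0) ≠ 0 := by
      intro p hp hzero
      have h := congrFun hzero ⟨0, hnpos⟩
      simp only [Pi.zero_apply] at h
      rw [Polynomial.mul_coeff_zero, hp, hq0, one_mul] at h
      exact one_ne_zero h
    -- the weight profile of G'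
    set W : ℕ → ℕ := fun t => (univ.filter fun c : Fin n => (G' 0 c).coeff t ≠ 0).card
      with hWdef
    have hWle : ∀ t, W t ≤ n := by
      intro t
      show (univ.filter fun c : Fin n => (G' 0 c).coeff t ≠ 0).card ≤ n
      calc (univ.filter fun c : Fin n => (G' 0 c).coeff t ≠ 0).card
          ≤ (univ : Finset (Fin n)).card := Finset.card_filter_le _ _
        _ = n := by rw [card_univ, Fintype.card_fin]
    have hW0 : W 0 = n := by
      show (univ.filter fun c : Fin n => (G' 0 c).coeff 0 ≠ 0).card = n
      rw [Finset.filter_true_of_mem (fun c _ => by rw [hq0 c]; exact one_ne_zero),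
        card_univ, Fintype.card_fin]
    have hws : ∀ (ε : ZMod 2) (t s : ℕ), s < t →
        (hammingNorm fun c : Fin n =>
          ((1 + Polynomial.C ε * Polynomial.X ^ t) * G' 0 c).coeff s) = W s := by
      intro ε t s hst
      have hfun : (fun c : Fin n => ((1 + Polynomial.C ε * Polynomial.X ^ t) * G' 0 c).coeff s)
          = fun c => (G' 0 c).coeff s := by
        funext c
        rw [hcoeff, if_neg (by omega), mul_zero, add_zero]
      rw [hfun]
      rfl
    have hwt : ∀ (ε : ZMod 2) (t : ℕ), 1 ≤ t →
        (hammingNorm fun c : Fin n =>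
          ((1 + Polynomial.C ε * Polynomial.X ^ t) * G' 0 c).coeff t)
        = if ε = 0 then W t else n - W t := by
      intro ε t ht
      have hfun : (fun c : Fin n => ((1 + Polynomial.C ε * Polynomial.X ^ t) * G' 0 c).coeff t)
          = fun c => (G' 0 c).coeff t + ε := by
        funext c
        rw [hcoeff, if_pos (le_refl t), Nat.sub_self, hq0 c, mul_one]
      rw [hfun]
      by_cases hε : ε = 0
      · subst hε
        rw [if_pos rfl]
        simp only [add_zero]
        rfl
      · rw [if_neg hε]
        have hε1 : ε = 1 := zmod2_ne_zero _ hε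
        subst hε1
        show (univ.filter fun c : Fin n => (G' 0 c).coeff t + 1 ≠ 0).card = n - W t
        have hiff : ∀ x : ZMod 2, (x + 1 ≠ 0) ↔ ¬ (x ≠ 0) := by decide
        have hfe : (univ.filter fun c : Fin n => (G' 0 c).coeff t + 1 ≠ 0)
            = (univ.filter fun c : Fin n => ¬ ((G' 0 c).coeff t ≠ 0)) :=
          Finset.filter_congr (fun c _ => hiff _)
        rw [hfe]
        have hsplit : (univ.filter fun c : Fin n => (G' 0 c).coeff t ≠ 0).card
            + (univ.filter fun c : Fin n => ¬ ((G' 0 c).coeff t ≠ 0)).card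
            = (univ : Finset (Fin n)).card :=
          Finset.card_filter_add_card_filter_not
            (p := fun c : Fin n => (G' 0 c).coeff t ≠ 0)
        rw [card_univ, Fintype.card_fin] at hsplit
        exact (Nat.eq_sub_of_add_eq' hsplit)
    -- upper bound via codewords 1 + ε X^t
    have helem : ∀ (ε : ZMod 2) (t : ℕ), 1 ≤ t → colDist G' t
        ≤ ∑ s ∈ Finset.range (t + 1), hammingNorm fun c : Fin n =>
          ((1 + Polynomial.C ε * Polynomial.X ^ t) * G' 0 c).coeff s :=
      fun ε t ht => colDist_le G' t _ (hpne' _ (hpc0 ε t ht))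
    have hsumgen : ∀ (ε : ZMod 2) (t : ℕ), 1 ≤ t → (∀ s, 1 ≤ s → s < t → W s = K) →
        ∑ s ∈ Finset.range (t + 1), (hammingNorm fun c : Fin n =>
          ((1 + Polynomial.C ε * Polynomial.X ^ t) * G' 0 c).coeff s)
        = n + (t - 1) * K + (if ε = 0 then W t else n - W t) := by
      intro ε t ht hprev
      rw [Finset.sum_range_succ, hwt ε t ht]
      congr 1
      have h0' : (hammingNorm fun c : Fin n =>
          ((1 + Polynomial.C ε * Polynomial.X ^ t) * G' 0 c).coeff 0) = n := by
        rw [hws ε t 0 (by omega), hW0]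
      have hks : ∀ s, 1 ≤ s → s < t → (hammingNorm fun c : Fin n =>
          ((1 + Polynomial.C ε * Polynomial.X ^ t) * G' 0 c).coeff s) = K := by
        intro s a b
        rw [hws ε t s b]
        exact hprev s a b
      rw [sum_head n K _ h0' t hks, if_neg (by omega)]
    -- forced weights
    have hWt : ∀ t, 1 ≤ t → t ≤ δ → t < j → W t = K := by
      intro t
      induction t using Nat.strong_induction_on with
      | _ t ih =>
        intro h1 h2 h3
        have hprev : ∀ s, 1 ≤ s → s < t → W s = K := by
          intro s a b
          exact ih s b a (by omega) (by omega)
        have hlow := heq t h3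
        rw [hGval t, min_eq_left h2] at hlow
        have h5 := helem 0 t h1
        rw [hsumgen 0 t h1 hprev, if_pos rfl, hlow] at h5
        have h6 := helem 1 t h1
        rw [hsumgen 1 t h1 hprev, if_neg one_ne_zero, hlow] at h6
        have hmp := mul_pred t K h1
        rw [hmp] at h5 h6
        exact squeeze_arith n K (W t) ((t - 1) * K) h2K (by rw [add_assoc] at h5 ⊢; exact h5)
          (by rw [add_assoc] at h6 ⊢; exact h6) (hWle t)
    -- final contradiction
    rcases le_or_gt j δ with hjd | hjd
    · -- j ≤ δ
      set ε : ZMod 2 := if W j ≤ K then 0 else 1 with hε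
      have h5 := helem ε j hjpos
      rw [hsumgen ε j hjpos (fun s a b => hWt s a (by omega) b)] at h5
      have h10 : (if ε = 0 then W j else n - W j) ≤ K := by
        by_cases hw : W j ≤ K
        · have he0 : ε = 0 := by rw [hε, if_pos hw]
          rw [if_pos he0]
          exact hw
        · have he1 : ε = 1 := by rw [hε, if_neg hw]
          rw [he1, if_neg one_ne_zero]
          exact arith_sub n K (W j) h2K hw
      have h11 : colDist G' j ≤ n + (j - 1) * K + K :=
        le_trans h5 (by exact Nat.add_le_add_left h10 _)
      have h12 : n + (j - 1) * K + K = n + j * K := by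
        rw [mul_pred j K hjpos, add_assoc]
      rw [hGval j, min_eq_left hjd] at hlt
      rw [h12] at h11
      exact absurd hlt (not_lt.2 h11)
    · -- j > δ : take the constant codeword
      have h5 := colDist_le G' j 1 (hpne' 1 (by simp))
      have h9 : (∑ s ∈ Finset.range (j + 1), hammingNorm fun c : Fin n =>
          ((1 : Polynomial (ZMod 2)) * G' 0 c).coeff s) = n + min j δ * K := by
        refine sum_w_eq n K δ _ ?_ ?_ ?_ j
        · have hfun : (fun c : Fin n => ((1 : Polynomial (ZMod 2)) * G' 0 c).coeff 0)
              = fun c => (G' 0 c).coeff 0 := by funext c; rw [one_mul]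
          rw [hfun]
          exact hW0
        · intro s h1 h2
          have hfun : (fun c : Fin n => ((1 : Polynomial (ZMod 2)) * G' 0 c).coeff s)
              = fun c => (G' 0 c).coeff s := by funext c; rw [one_mul]
          rw [hfun]
          exact hWt s h1 h2 (by omega)
        · intro s hs
          show (univ.filter fun c : Fin n =>
            ((1 : Polynomial (ZMod 2)) * G' 0 c).coeff s ≠ 0).card = 0
          rw [Finset.card_eq_zero, Finset.filter_eq_empty_iff]
          intro c _
          simp only [one_mul, ne_eq, not_not]
          exact hdeg' c s hs
      rw [h9, min_eq_right (le_of_lt hjd)] at h5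
      rw [hGval j, min_eq_right (le_of_lt hjd)] at hlt
      exact absurd hlt (not_lt.2 h5)


end
end

section
/- Let δ ≥ 1, k ≥ 1, m ≥ 1, and let S(δ+k)_k ∈ F_2^{(δ+k)×(2^{δ+k}−2^δ)} be the matrix whose columns are exactly all vectors of F_2^{δ+k} whose first k entries are not all zero, and let S(δ+k)_k^m consist of m horizontal copies of S(δ+k)_k. Then every nonzero codeword of the m-fold k-partial simplex code generated by S(δ+k)_k^m that is a linear combination of just the first k rows of S(δ+k)_k^m has Hamming weight m·2^{δ+k−1}, and every other nonzero codeword has Hamming weight m·(2^{δ+k−1} − 2^{δ−1}). In particular, the minimum distance of this code equals m·2^{δ−1}(2^k − 1). -/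
open Finset in
private lemma zmod2_ne' (x : ZMod 2) (h : x ≠ 0) : x = 1 := by revert x; decide

open Finset in
private lemma dot_flip' {n : ℕ} (u v : Fin n → ZMod 2) (i0 : Fin n) :
    dotProduct u (v + Pi.single i0 1) = dotProduct u v + u i0 := by
  rw [dotProduct_add, dotProduct_single, mul_one]

open Finset in
private lemma half_card' {n : ℕ} (u : Fin n → ZMod 2) (i0 : Fin n) (hu : u i0 ≠ 0)
    (A : Finset (Fin n → ZMod 2)) (hA : ∀ v ∈ A, v + Pi.single i0 1 ∈ A) :
    2 * (A.filter (fun v => dotProduct u v ≠ 0)).card = A.card := by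
  have hui : u i0 = 1 := zmod2_ne' _ hu
  have hinv : ∀ v : Fin n → ZMod 2, v + Pi.single i0 1 + Pi.single i0 1 = v := by
    intro v; funext i
    by_cases h : i = i0 <;>
      simp [h, Pi.single_apply, add_assoc, show (1:ZMod 2)+1=0 from rfl]
  have key : (A.filter (fun v => dotProduct u v ≠ 0)).card
      = (A.filter (fun v => ¬ dotProduct u v ≠ 0)).card := by
    apply Finset.card_nbij (fun v => v + Pi.single i0 1)
    · intro v hv
      simp only [mem_filter, not_not, mem_coe] at hv ⊢
      refine ⟨hA v hv.1, ?_⟩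
      have h1 := zmod2_ne' _ hv.2
      rw [dot_flip', h1, hui]; decide
    · intro v _ w _ h
      have := congrArg (fun x => x + Pi.single i0 (1 : ZMod 2)) h
      simpa only [hinv] using this
    · intro w hw
      simp only [coe_filter, Set.mem_setOf_eq, not_not] at hw
      refine ⟨w + Pi.single i0 1, ?_, hinv w⟩
      simp only [coe_filter, Set.mem_setOf_eq]
      refine ⟨hA w hw.1, ?_⟩
      rw [dot_flip', hw.2, hui]; decide
  have := Finset.card_filter_add_card_filter_not
    (s := A) (p := fun v => dotProduct u v ≠ 0)
  omega

open Finset in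
private lemma card_bad' (δ k : ℕ) :
    (Finset.univ.filter (fun v : Fin (δ + k) → ZMod 2 =>
      ∀ i : Fin (δ + k), i.val < k → v i = 0)).card = 2 ^ δ := by
  rw [← Fintype.card_subtype]
  have e : {v : Fin (δ + k) → ZMod 2 // ∀ i, i.val < k → v i = 0} ≃ (Fin δ → ZMod 2) :=
    { toFun := fun v => fun j => v.1 ⟨k + j.1, by omega⟩
      invFun := fun w => ⟨fun i => if h : k ≤ i.1 then w ⟨i.1 - k, by omega⟩ else 0,
        fun i hi => by simp [Nat.not_le.2 hi]⟩
      left_inv := by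
        rintro ⟨v, hv⟩
        apply Subtype.ext; funext i
        by_cases h : k ≤ i.1
        · simp only [h, dif_pos]
          congr 1; apply Fin.ext; simp; omega
        · simp only [h, dif_neg, not_false_iff]
          exact (hv i (by omega)).symm
      right_inv := by
        intro w; funext j
        simp only [add_tsub_cancel_left]
        rw [dif_pos (by omega)] }
  rw [Fintype.card_congr e]
  simp

private lemma pow_split' (a : ℕ) (h : 1 ≤ a) : 2 * 2 ^ (a - 1) = 2 ^ a := by
  rw [← pow_succ']
  congr 1
  omega

private lemma harith' (δ k : ℕ) (hδ : 1 ≤ δ) :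
    2 ^ (δ - 1) * (2 ^ k - 1) = 2 ^ (δ + k - 1) - 2 ^ (δ - 1) := by
  rw [Nat.mul_sub, mul_one, ← pow_add]
  have hx : δ - 1 + k = δ + k - 1 := by omega
  rw [hx]

/-- In the `m`-fold `k`-partial simplex code generated by `m` horizontal
copies of `S(δ+k)_k` (columns = all vectors of `F_2^(δ+k)` whose first `k` entries are
not all zero), every nonzero codeword that is a linear combination of just the first `k`
rows has Hamming weight `m·2^(δ+k-1)`, and every other nonzero codeword has Hamming
weight `m·(2^(δ+k-1) − 2^(δ-1))`; in particular the minimum distance of this code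
equals `m·2^(δ-1)·(2^k − 1)`. -/
theorem foldedKPartialSimplex_weight (δ k m : ℕ) (hδ : 1 ≤ δ) (hk : 1 ≤ k) (hm : 1 ≤ m)
    (S : Matrix (Fin (δ + k)) (Fin (2 ^ (δ + k) - 2 ^ δ)) (ZMod 2))
    (hS : ∀ v : Fin (δ + k) → ZMod 2, (∃ i : Fin (δ + k), i.val < k ∧ v i ≠ 0) →
      ∃! c : Fin (2 ^ (δ + k) - 2 ^ δ), (fun i : Fin (δ + k) => S i c) = v)
    (Sm : Matrix (Fin (δ + k)) (Fin m × Fin (2 ^ (δ + k) - 2 ^ δ)) (ZMod 2))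
    (hSm : ∀ (i : Fin (δ + k)) (a : Fin m) (j : Fin (2 ^ (δ + k) - 2 ^ δ)),
      Sm i (a, j) = S i j) :
    (∀ u : Fin (δ + k) → ZMod 2, u ≠ 0 → (∀ i : Fin (δ + k), k ≤ i.val → u i = 0) →
      hammingNorm (Matrix.vecMul u Sm) = m * 2 ^ (δ + k - 1)) ∧
    (∀ u : Fin (δ + k) → ZMod 2, (∃ i : Fin (δ + k), k ≤ i.val ∧ u i ≠ 0) →
      hammingNorm (Matrix.vecMul u Sm) = m * (2 ^ (δ + k - 1) - 2 ^ (δ - 1))) ∧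
    IsLeast {w : ℕ | ∃ u : Fin (δ + k) → ZMod 2, u ≠ 0 ∧ w = hammingNorm (Matrix.vecMul u Sm)}
      (m * (2 ^ (δ - 1) * (2 ^ k - 1))) := by
  open Finset in
  have hkk : k < δ + k := Nat.lt_add_of_pos_left hδ
  -- counting the "good" vectors
  have hcount : (univ.filter (fun v : Fin (δ+k) → ZMod 2 =>
      ∃ i : Fin (δ+k), i.val < k ∧ v i ≠ 0)).card = 2 ^ (δ+k) - 2 ^ δ := by
    have h1 := Finset.card_filter_add_card_filter_not
      (s := (univ : Finset (Fin (δ+k) → ZMod 2)))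
      (p := fun v => ∃ i : Fin (δ+k), i.val < k ∧ v i ≠ 0)
    have h2 : (univ.filter (fun v : Fin (δ+k) → ZMod 2 =>
        ¬ ∃ i : Fin (δ+k), i.val < k ∧ v i ≠ 0)).card = 2 ^ δ := by
      rw [← card_bad' δ k]
      congr 1
      apply Finset.filter_congr
      intro v _
      push_neg
      rfl
    have h3 : (univ : Finset (Fin (δ+k) → ZMod 2)).card = 2 ^ (δ+k) := by simp
    rw [h2, h3] at h1
    exact Nat.eq_sub_of_add_eq h1
  -- every column of S is "good", and columns are distinct
  have colGood : ∀ c : Fin (2^(δ+k) - 2^δ), ∃ i : Fin (δ+k), i.val < k ∧ S i c ≠ 0 := by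
    let g : {v : Fin (δ+k) → ZMod 2 // ∃ i : Fin (δ+k), i.val < k ∧ v i ≠ 0}
        → Fin (2^(δ+k)-2^δ) := fun v => (hS v.1 v.2).choose
    have hg : ∀ v, (fun i => S i (g v)) = v.1 := fun v => (hS v.1 v.2).choose_spec.1
    have ginj : Function.Injective g := by
      intro v w h
      apply Subtype.ext
      rw [← hg v, ← hg w, h]
    have gcard : Fintype.card {v : Fin (δ+k) → ZMod 2 // ∃ i : Fin (δ+k), i.val < k ∧ v i ≠ 0}
        = Fintype.card (Fin (2^(δ+k)-2^δ)) := by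
      rw [Fintype.card_subtype, hcount, Fintype.card_fin]
    have gsurj : Function.Surjective g :=
      ((Fintype.bijective_iff_injective_and_card g).2 ⟨ginj, gcard⟩).2
    intro c
    obtain ⟨v, hv⟩ := gsurj c
    obtain ⟨i, hik, hi⟩ := v.2
    refine ⟨i, hik, ?_⟩
    rw [← hv]
    have h1 : S i (g v) = v.1 i := congrFun (hg v) i
    rw [h1]; exact hi
  have colInj : ∀ c1 c2, (fun i => S i c1) = (fun i => S i c2) → c1 = c2 := by
    intro c1 c2 h
    obtain ⟨i, hik, hi⟩ := colGood c1
    exact (hS (fun i => S i c1) ⟨i, hik, hi⟩).unique rfl h.symm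
  -- weight reduction lemma
  have hw : ∀ u : Fin (δ+k) → ZMod 2,
      hammingNorm (Matrix.vecMul u Sm)
        = m * (univ.filter (fun v : Fin (δ+k) → ZMod 2 =>
            (∃ i : Fin (δ+k), i.val < k ∧ v i ≠ 0) ∧ dotProduct u v ≠ 0)).card := by
    intro u
    have hval : ∀ p : Fin m × Fin (2^(δ+k)-2^δ),
        Matrix.vecMul u Sm p = dotProduct u (fun i => S i p.2) := by
      intro p
      have h1 : (fun i => Sm i p) = fun i => S i p.2 := funext fun i => hSm i p.1 p.2
      show dotProduct u (fun i => Sm i p) = _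
      rw [h1]
    simp only [hammingNorm]
    have hsplit : (univ.filter (fun p : Fin m × Fin (2^(δ+k)-2^δ) =>
        Matrix.vecMul u Sm p ≠ 0))
        = univ ×ˢ (univ.filter (fun j => dotProduct u (fun i => S i j) ≠ 0)) := by
      ext p
      simp [hval p, Finset.mem_product]
    rw [hsplit, Finset.card_product, card_univ, Fintype.card_fin]
    congr 1
    apply Finset.card_bij (fun j _ => fun i => S i j)
    · intro j hj
      simp only [mem_filter, mem_univ, true_and] at hj ⊢
      exact ⟨colGood j, hj⟩
    · intro c1 _ c2 _ h; exact colInj c1 c2 h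
    · intro v hv
      simp only [mem_filter, mem_univ, true_and] at hv
      obtain ⟨c, hc, -⟩ := hS v hv.1
      refine ⟨c, ?_, hc⟩
      simp only [mem_filter, mem_univ, true_and]
      rw [hc]; exact hv.2
  -- total count for nonzero u
  have countAll : ∀ (u : Fin (δ+k) → ZMod 2) (i0 : Fin (δ+k)), u i0 ≠ 0 →
      (univ.filter (fun v : Fin (δ+k) → ZMod 2 =>
        dotProduct u v ≠ 0)).card = 2 ^ (δ+k-1) := by
    intro u i0 hu
    have h := half_card' u i0 hu univ (fun v _ => mem_univ _)
    have h3 : (univ : Finset (Fin (δ+k) → ZMod 2)).card = 2 ^ (δ+k) := by simp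
    rw [h3, ← pow_split' (δ+k) (le_trans hδ (Nat.le_add_right δ k))] at h
    exact Nat.eq_of_mul_eq_mul_left (by norm_num) h
  -- "bad" count when u has support beyond the first k rows
  have countBad2 : ∀ (u : Fin (δ+k) → ZMod 2) (i0 : Fin (δ+k)), k ≤ i0.val → u i0 ≠ 0 →
      (univ.filter (fun v : Fin (δ+k) → ZMod 2 =>
        (∀ i : Fin (δ+k), i.val < k → v i = 0) ∧ dotProduct u v ≠ 0)).card
        = 2 ^ (δ-1) := by
    intro u i0 hki hu
    have hclosed : ∀ v ∈ univ.filter (fun v : Fin (δ+k) → ZMod 2 =>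
        ∀ i : Fin (δ+k), i.val < k → v i = 0),
        v + Pi.single i0 1 ∈ univ.filter (fun v : Fin (δ+k) → ZMod 2 =>
        ∀ i : Fin (δ+k), i.val < k → v i = 0) := by
      intro v hv
      simp only [mem_filter, mem_univ, true_and] at hv ⊢
      intro i hi
      have hne : i ≠ i0 := by
        intro h; rw [h] at hi; exact absurd hki (not_le.mpr hi)
      simp [Pi.single_apply, hne, hv i hi]
    have h := half_card' u i0 hu _ hclosed
    rw [Finset.filter_filter, card_bad', ← pow_split' δ hδ] at h
    exact Nat.eq_of_mul_eq_mul_left (by norm_num) h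
  -- "bad" count when u is supported on the first k rows
  have countBad1 : ∀ u : Fin (δ+k) → ZMod 2, (∀ i : Fin (δ+k), k ≤ i.val → u i = 0) →
      (univ.filter (fun v : Fin (δ+k) → ZMod 2 =>
        (∀ i : Fin (δ+k), i.val < k → v i = 0) ∧ dotProduct u v ≠ 0)).card = 0 := by
    intro u hu
    rw [Finset.card_eq_zero, Finset.filter_eq_empty_iff]
    intro v _
    push_neg
    intro hbad
    apply Finset.sum_eq_zero
    intro i _
    by_cases h : i.val < k
    · rw [hbad i h, mul_zero]
    · rw [hu i (Nat.le_of_not_lt h), zero_mul]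
  -- splitting the total count
  have split : ∀ u : Fin (δ+k) → ZMod 2,
      (univ.filter (fun v : Fin (δ+k) → ZMod 2 => dotProduct u v ≠ 0)).card
      = (univ.filter (fun v : Fin (δ+k) → ZMod 2 =>
          (∀ i : Fin (δ+k), i.val < k → v i = 0) ∧ dotProduct u v ≠ 0)).card
        + (univ.filter (fun v : Fin (δ+k) → ZMod 2 =>
          (∃ i : Fin (δ+k), i.val < k ∧ v i ≠ 0) ∧ dotProduct u v ≠ 0)).card := by
    intro u
    have h := Finset.card_filter_add_card_filter_not
      (s := univ.filter (fun v : Fin (δ+k) → ZMod 2 => dotProduct u v ≠ 0))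
      (p := fun v => ∀ i : Fin (δ+k), i.val < k → v i = 0)
    rw [Finset.filter_filter, Finset.filter_filter] at h
    have e1 : (univ.filter (fun v : Fin (δ+k) → ZMod 2 =>
        dotProduct u v ≠ 0 ∧ ∀ i : Fin (δ+k), i.val < k → v i = 0))
        = univ.filter (fun v : Fin (δ+k) → ZMod 2 =>
          (∀ i : Fin (δ+k), i.val < k → v i = 0) ∧ dotProduct u v ≠ 0) := by
      apply Finset.filter_congr
      intro v _
      exact and_comm
    have e2 : (univ.filter (fun v : Fin (δ+k) → ZMod 2 =>
        dotProduct u v ≠ 0 ∧ ¬ ∀ i : Fin (δ+k), i.val < k → v i = 0))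
        = univ.filter (fun v : Fin (δ+k) → ZMod 2 =>
          (∃ i : Fin (δ+k), i.val < k ∧ v i ≠ 0) ∧ dotProduct u v ≠ 0) := by
      apply Finset.filter_congr
      intro v _
      constructor
      · rintro ⟨hd, hb⟩
        push_neg at hb
        exact ⟨hb, hd⟩
      · rintro ⟨hb, hd⟩
        refine ⟨hd, ?_⟩
        push_neg
        exact hb
    rw [e1, e2] at h
    exact h.symm
  -- the first two parts
  have part1 : ∀ u : Fin (δ + k) → ZMod 2, u ≠ 0 → (∀ i : Fin (δ + k), k ≤ i.val → u i = 0) →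
      hammingNorm (Matrix.vecMul u Sm) = m * 2 ^ (δ + k - 1) := by
    intro u hu0 hzero
    obtain ⟨i0, hi0⟩ := Function.ne_iff.mp hu0
    have hi0' : u i0 ≠ 0 := by simpa using hi0
    rw [hw u]
    have h1 := split u
    have h2 := countBad1 u hzero
    have h3 := countAll u i0 hi0'
    rw [h2, h3] at h1
    rw [zero_add] at h1
    congr 1
    exact h1.symm
  have part2 : ∀ u : Fin (δ + k) → ZMod 2, (∃ i : Fin (δ + k), k ≤ i.val ∧ u i ≠ 0) →
      hammingNorm (Matrix.vecMul u Sm) = m * (2 ^ (δ + k - 1) - 2 ^ (δ - 1)) := by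
    rintro u ⟨i0, hki, hi0⟩
    rw [hw u]
    have h1 := split u
    have h2 := countBad2 u i0 hki hi0
    have h3 := countAll u i0 hi0
    rw [h2, h3] at h1
    congr 1
    have h1' := h1.symm
    rw [add_comm] at h1'
    exact Nat.eq_sub_of_add_eq h1'
  refine ⟨part1, part2, ?_, ?_⟩
  · -- membership
    refine ⟨Pi.single (⟨k, hkk⟩ : Fin (δ+k)) 1, ?_, ?_⟩
    · intro h
      have := congrFun h ⟨k, hkk⟩
      simp at this
    · rw [part2 _ ⟨⟨k, hkk⟩, le_refl k, by simp⟩, harith' δ k hδ]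
  · -- lower bound
    rintro w ⟨u, hu0, rfl⟩
    by_cases hcase : ∃ i : Fin (δ+k), k ≤ i.val ∧ u i ≠ 0
    · rw [part2 u hcase, harith' δ k hδ]
    · push_neg at hcase
      rw [part1 u hu0 hcase, harith' δ k hδ]
      exact Nat.mul_le_mul le_rfl (Nat.sub_le _ _)
end

section
/- Let δ ≥ 1, k ≥ 1, 1 ≤ j ≤ ⌊δ/k⌋, and let S(δ+k)_k ∈ F_2^{(δ+k)×(2^{δ+k}−2^δ)} be the matrix whose columns are exactly all vectors of F_2^{δ+k} whose first k entries are not all zero. Then every F_2-linear combination of the first k(j+1) rows of S(δ+k)_k in which at least one of the rows kj+1, …, k(j+1) occurs with nonzero coefficient has Hamming weight exactly 2^{δ−1}(2^k−1) = (2^{δ+k} − 2^δ)/2. -/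
/-- Every `F_2`-linear combination of the first `k(j+1)` rows of
`S(δ+k)_k` (columns = all vectors of `F_2^(δ+k)` whose first `k` entries are not all
zero) in which at least one of the rows `kj+1, …, k(j+1)` (i.e. indices `kj, …, k(j+1)-1`)
occurs with nonzero coefficient has Hamming weight exactly
`2^(δ-1)·(2^k−1) = (2^(δ+k) − 2^δ)/2`. -/
theorem kPartialSimplex_row_combination_weight (δ k j : ℕ) (hδ : 1 ≤ δ) (hk : 1 ≤ k)
    (hj1 : 1 ≤ j) (hj : j ≤ δ / k)
    (P : Matrix (Fin (δ + k)) (Fin (2 ^ (δ + k) - 2 ^ δ)) (ZMod 2))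
    (hP : ∀ v : Fin (δ + k) → ZMod 2, (∃ i : Fin (δ + k), i.val < k ∧ v i ≠ 0) →
      ∃! c : Fin (2 ^ (δ + k) - 2 ^ δ), (fun i : Fin (δ + k) => P i c) = v)
    (u : Fin (δ + k) → ZMod 2)
    (hsupp : ∀ i : Fin (δ + k), k * (j + 1) ≤ i.val → u i = 0)
    (hmid : ∃ i : Fin (δ + k), k * j ≤ i.val ∧ i.val < k * (j + 1) ∧ u i ≠ 0) :
    hammingNorm (Matrix.vecMul u P) = 2 ^ (δ - 1) * (2 ^ k - 1) ∧
    2 ^ (δ - 1) * (2 ^ k - 1) = (2 ^ (δ + k) - 2 ^ δ) / 2 := by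
  classical
  obtain ⟨i₀, hi₀l, hi₀r, hu₀⟩ := hmid
  have hzmod : ∀ a : ZMod 2, a ≠ 0 → a = 1 := by decide
  have hzmod' : ∀ a : ZMod 2, a ≠ 1 ↔ a = 0 := by decide
  have hu1 : u i₀ = 1 := hzmod _ hu₀
  have hi₀ : k ≤ i₀.val := le_trans (Nat.le_mul_of_pos_right k hj1) hi₀l
  set p : (Fin (δ + k) → ZMod 2) → Prop :=
    fun v => ∃ i : Fin (δ + k), i.val < k ∧ v i ≠ 0 with hp
  set D : (Fin (δ + k) → ZMod 2) → ZMod 2 := fun v => ∑ i, u i * v i with hD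
  -- cardinality of the complement of p
  have hcompl : Fintype.card {v : Fin (δ + k) → ZMod 2 // ¬ p v} = 2 ^ δ := by
    have hzero : ∀ v : {v : Fin (δ + k) → ZMod 2 // ¬ p v},
        ∀ i : Fin (δ + k), i.val < k → v.1 i = 0 := by
      rintro ⟨v, hv⟩ i hik
      by_contra hne
      exact hv ⟨i, hik, hne⟩
    have e : {v : Fin (δ + k) → ZMod 2 // ¬ p v} ≃ (Fin δ → ZMod 2) :=
      { toFun := fun v t => v.1 ⟨k + t.1, by omega⟩
        invFun := fun w => ⟨fun i => if h : k ≤ i.1 then w ⟨i.1 - k, by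
            have := i.2; omega⟩ else 0, by
          rintro ⟨i, hik, hne⟩
          exact hne (by simp [Nat.not_le.mpr hik])⟩
        left_inv := by
          rintro ⟨v, hv⟩
          apply Subtype.ext
          funext i
          by_cases h : k ≤ i.1
          · simp only [h, dif_pos]
            congr 1
            exact Fin.ext (by simp; omega)
          · simp only [h, dif_neg]
            exact (hzero ⟨v, hv⟩ i (by omega)).symm
        right_inv := by
          intro w
          funext t
          have h : k ≤ k + t.1 := Nat.le_add_right _ _
          simp only [h, dif_pos]
          congr 1
          exact Fin.ext (by simp) }
    rw [Fintype.card_congr e]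
    simp
  have htotal : Fintype.card (Fin (δ + k) → ZMod 2) = 2 ^ (δ + k) := by simp
  have hpow : 2 ^ δ ≤ 2 ^ (δ + k) := Nat.pow_le_pow_right (by norm_num) (by omega)
  have hcardp : Fintype.card {v : Fin (δ + k) → ZMod 2 // p v} = 2 ^ (δ + k) - 2 ^ δ := by
    have h1 := Fintype.card_subtype_compl p
      (α := Fin (δ + k) → ZMod 2)
    have h2 := Fintype.card_subtype_le (α := Fin (δ + k) → ZMod 2) p
    omega
  -- the column map
  set φ : Fin (2 ^ (δ + k) - 2 ^ δ) → (Fin (δ + k) → ZMod 2) :=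
    fun c i => P i c with hφ
  set ψ : {v : Fin (δ + k) → ZMod 2 // p v} → Fin (2 ^ (δ + k) - 2 ^ δ) :=
    fun v => (hP v.1 v.2).choose with hψ
  have hψspec : ∀ v : {v : Fin (δ + k) → ZMod 2 // p v}, φ (ψ v) = v.1 :=
    fun v => (hP v.1 v.2).choose_spec.1
  have hψinj : Function.Injective ψ := by
    intro v₁ v₂ h
    apply Subtype.ext
    rw [← hψspec v₁, ← hψspec v₂, h]
  have hψbij : Function.Bijective ψ :=
    (Fintype.bijective_iff_injective_and_card ψ).mpr ⟨hψinj, by simp [hcardp]⟩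
  have hcol : ∀ c : Fin (2 ^ (δ + k) - 2 ^ δ), p (φ c) := by
    intro c
    obtain ⟨v, hv⟩ := hψbij.2 c
    rw [← hv, hψspec v]
    exact v.2
  have hφinj : Function.Injective φ := by
    intro c₁ c₂ h
    exact ((hP (φ c₂) (hcol c₂)).unique h rfl)
  -- Hamming norm as a count over columns, then over vectors
  have hnorm : hammingNorm (Matrix.vecMul u P) =
      (Finset.univ.filter fun c : Fin (2 ^ (δ + k) - 2 ^ δ) =>
        Matrix.vecMul u P c ≠ 0).card := rfl
  have hvm : ∀ c, Matrix.vecMul u P c = D (φ c) := by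
    intro c
    simp [Matrix.vecMul, dotProduct, hD, hφ]
  have hcount1 : hammingNorm (Matrix.vecMul u P) =
      (Finset.univ.filter fun v : Fin (δ + k) → ZMod 2 => p v ∧ D v = 1).card := by
    rw [hnorm]
    apply Finset.card_bij (fun c _ => φ c)
    · intro c hc
      simp only [Finset.mem_filter, Finset.mem_univ, true_and] at hc ⊢
      rw [hvm] at hc
      exact ⟨hcol c, hzmod _ hc⟩
    · intro c₁ _ c₂ _ h
      exact hφinj h
    · intro v hv
      simp only [Finset.mem_filter, Finset.mem_univ, true_and] at hv
      refine ⟨ψ ⟨v, hv.1⟩, ?_, hψspec ⟨v, hv.1⟩⟩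
      simp only [Finset.mem_filter, Finset.mem_univ, true_and]
      rw [hvm, hψspec ⟨v, hv.1⟩, hv.2]
      exact one_ne_zero
  -- the flip involution
  set f : (Fin (δ + k) → ZMod 2) → (Fin (δ + k) → ZMod 2) :=
    fun v => Function.update v i₀ (v i₀ + 1) with hf
  have hDflip : ∀ v, D (f v) = D v + 1 := by
    intro v
    rw [hD]
    simp only [hf]
    rw [Fintype.sum_eq_add_sum_compl i₀ (fun i => u i * Function.update v i₀ (v i₀ + 1) i),
      Fintype.sum_eq_add_sum_compl i₀ (fun i => u i * v i)]
    have hsum : ∑ i ∈ {i₀}ᶜ, u i * Function.update v i₀ (v i₀ + 1) i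
        = ∑ i ∈ {i₀}ᶜ, u i * v i := by
      apply Finset.sum_congr rfl
      intro i hi
      rw [Function.update_of_ne (by simpa using hi)]
    rw [hsum, Function.update_self, hu1]
    ring
  have hpflip : ∀ v, p v → p (f v) := by
    rintro v ⟨i, hik, hne⟩
    refine ⟨i, hik, ?_⟩
    show Function.update v i₀ (v i₀ + 1) i ≠ 0
    rwa [Function.update_of_ne (fun h => by rw [h] at hik; omega)]
  have hff : ∀ v, f (f v) = v := by
    intro v
    show Function.update (Function.update v i₀ (v i₀ + 1)) i₀
        (Function.update v i₀ (v i₀ + 1) i₀ + 1) = v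
    rw [Function.update_idem, Function.update_self]
    have h11 : (1 : ZMod 2) + 1 = 0 := by decide
    rw [add_assoc, h11, add_zero, Function.update_eq_self]
  -- card (p ∧ D = 1) = card (p ∧ D = 0)
  have hhalf : (Finset.univ.filter fun v : Fin (δ + k) → ZMod 2 => p v ∧ D v = 1).card
      = (Finset.univ.filter fun v : Fin (δ + k) → ZMod 2 => p v ∧ D v = 0).card := by
    apply Finset.card_bij (fun v _ => f v)
    · intro v hv
      simp only [Finset.mem_filter, Finset.mem_univ, true_and] at hv ⊢
      refine ⟨hpflip v hv.1, ?_⟩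
      rw [hDflip, hv.2]
      decide
    · intro v₁ _ v₂ _ h
      have := congrArg f h
      rwa [hff, hff] at this
    · intro w hw
      simp only [Finset.mem_filter, Finset.mem_univ, true_and] at hw
      refine ⟨f w, ?_, hff w⟩
      simp only [Finset.mem_filter, Finset.mem_univ, true_and]
      refine ⟨hpflip w hw.1, ?_⟩
      rw [hDflip, hw.2]
      decide
  -- sum of the two halves is card of p
  have hsplit : (Finset.univ.filter fun v : Fin (δ + k) → ZMod 2 => p v ∧ D v = 1).card
      + (Finset.univ.filter fun v : Fin (δ + k) → ZMod 2 => p v ∧ D v = 0).card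
      = 2 ^ (δ + k) - 2 ^ δ := by
    have h1 : (Finset.univ.filter fun v : Fin (δ + k) → ZMod 2 => p v ∧ D v = 1)
        = (Finset.univ.filter p).filter (fun v => D v = 1) := by
      rw [Finset.filter_filter]
    have h0 : (Finset.univ.filter fun v : Fin (δ + k) → ZMod 2 => p v ∧ D v = 0)
        = (Finset.univ.filter p).filter (fun v => ¬ D v = 1) := by
      rw [Finset.filter_filter]
      apply Finset.filter_congr
      intro v _
      exact and_congr_right fun _ => (hzmod' (D v)).symm
    rw [h1, h0, Finset.card_filter_add_card_filter_not]
    rw [← Fintype.card_subtype, hcardp]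
  -- arithmetic
  have harith : 2 ^ (δ + k) - 2 ^ δ = 2 * (2 ^ (δ - 1) * (2 ^ k - 1)) := by
    have h2 : (2 : ℕ) ^ δ = 2 * 2 ^ (δ - 1) := by
      rw [← pow_succ']; congr 1; omega
    have h3 : (2 : ℕ) ^ (δ - 1) * (2 ^ k - 1) = 2 ^ (δ - 1) * 2 ^ k - 2 ^ (δ - 1) := by
      rw [Nat.mul_sub, mul_one]
    rw [pow_add, h2, h3, Nat.mul_sub]
    congr 1
    ring
  have hA : (Finset.univ.filter fun v : Fin (δ + k) → ZMod 2 => p v ∧ D v = 1).card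
      = 2 ^ (δ - 1) * (2 ^ k - 1) := by
    have h2A : 2 * (Finset.univ.filter fun v : Fin (δ + k) → ZMod 2 => p v ∧ D v = 1).card
        = 2 * (2 ^ (δ - 1) * (2 ^ k - 1)) := by omega
    omega
  refine ⟨by rw [hcount1, hA], ?_⟩
  rw [harith]
  omega
end
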